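/- arXiv:2605.19972 — 4 statements merged into one kernel-verified Lean document; each statement's English description precedes it below -/
import Mathlib

section
/- Let d ≥ 2, let x, y ∈ S^{d−1}, and set η = ⟨x, y⟩. Let F : S^{d−1} → ℝ^d be a bounded measurable map, let R be a random d×d orthogonal matrix distributed according to the Haar probability measure on the orthogonal group O(d), and set x̄ = Rᵀ F(Rx). Assume that ⟨x̄, x⟩ ≠ 0 almost surely and that (‖x̄‖₂² − ⟨x̄, x⟩²)/⟨x̄, x⟩² is integrable. Define the ratio estimator η̂ = ⟨x̄, y⟩ / ⟨x̄, x⟩. Then E[(η̂ − η)²] = ((1 − η²)/(d − 1)) · E[(‖x̄‖₂² − ⟨x̄, x⟩²)/⟨x̄, x⟩²]. -/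
open MeasureTheory
open scoped RealInnerProductSpace Matrix

instance matrixMeasurableSpace {n : Type*} : MeasurableSpace (Matrix n n ℝ) :=
  (inferInstance : MeasurableSpace (n → n → ℝ))

/-- Action of a matrix `R` on a vector of Euclidean space. -/
noncomputable def matAct {d : ℕ} (R : Matrix (Fin d) (Fin d) ℝ)
    (x : EuclideanSpace ℝ (Fin d)) : EuclideanSpace ℝ (Fin d) :=
  Matrix.toEuclideanLin R x

/-!
Right multiplication `R ↦ R * M` by an `M ∈ O(d)` fixing `x` preserves the Haar measure and turns
`x̄` into `Mᵀ x̄`, so `Q v = E[⟨x̄, v⟩² / ⟨x̄, x⟩²]` is invariant under the stabiliser of `x`.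
Reflections show that this stabiliser is transitive on the unit vectors orthogonal to `x`, so `Q`
is constant on them, and summing over an orthonormal basis of `x^⊥` gives
`E[(‖x̄‖² - ⟨x̄, x⟩²) / ⟨x̄, x⟩²] = (d - 1) Q u` for every such unit vector `u`.
Finally `η̂ - η = ⟨x̄, y - η x⟩ / ⟨x̄, x⟩` and `‖y - η x‖² = 1 - η²`.
-/

local notation "O(" d ")" => Matrix.orthogonalGroup (Fin d) ℝ

instance {n : Type*} [Fintype n] : BorelSpace (Matrix n n ℝ) :=
  inferInstanceAs (BorelSpace (n → n → ℝ))

instance {n : Type*} [Fintype n] [DecidableEq n] :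
    SecondCountableTopology (Matrix.orthogonalGroup n ℝ) :=
  haveI : SecondCountableTopology (Matrix n n ℝ) :=
    inferInstanceAs (SecondCountableTopology (n → n → ℝ))
  TopologicalSpace.Subtype.secondCountableTopology _

/-- `μ.map (· * g)` is again left invariant with the same total mass, so uniqueness of left
invariant measures up to scaling forces it to be `μ`. -/
theorem MeasureTheory.Measure.isMulRightInvariant_of_isFiniteMeasure {G : Type*}
    [MeasurableSpace G] [Group G] [MeasurableMul₂ G] [MeasurableInv G] (μ : Measure G)
    [IsFiniteMeasure μ] [μ.IsMulLeftInvariant] : μ.IsMulRightInvariant := by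
  refine ⟨fun g => ?_⟩
  rcases eq_zero_or_neZero μ with rfl | _
  · simp
  have huniv : μ.map (· * g) Set.univ = μ Set.univ :=
    map_apply_of_aemeasurable (measurable_mul_const g).aemeasurable MeasurableSet.univ
  rw [measure_eq_div_smul (μ.map (· * g)) μ (s := Set.univ) (NeZero.ne _) (measure_ne_top μ _),
    huniv, ENNReal.div_self (NeZero.ne _) (measure_ne_top μ _), one_smul]

theorem exists_finset_orthonormal_compl {E : Type*} [NormedAddCommGroup E]
    [InnerProductSpace ℝ E] [FiniteDimensional ℝ E] {x : E} (hx : ‖x‖ = 1) :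
    ∃ s : Finset E, (s.card : ℝ) = Module.finrank ℝ E - 1 ∧ (∀ e ∈ s, ‖e‖ = 1 ∧ ⟪x, e⟫ = 0) ∧
      ∀ v, ∑ e ∈ s, ⟪v, e⟫ ^ 2 = ‖v‖ ^ 2 - ⟪v, x⟫ ^ 2 := by
  classical
  have hxon : Orthonormal ℝ ((↑) : ({x} : Set E) → E) :=
    orthonormal_subsingleton_iff.mpr (by simpa using hx)
  obtain ⟨t, b, hxt, hb⟩ := hxon.exists_orthonormalBasis_extension
  have hxt : x ∈ t := hxt rfl
  have hon : Orthonormal ℝ ((↑) : t → E) := hb ▸ b.orthonormal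
  refine ⟨t.erase x, ?_, fun e he => ⟨?_, ?_⟩, fun v => ?_⟩
  · rw [Finset.card_erase_of_mem hxt, Nat.cast_sub (Finset.card_pos.mpr ⟨x, hxt⟩),
      Module.finrank_eq_card_basis b.toBasis, Fintype.card_coe, Nat.cast_one]
  · exact hon.1 ⟨e, Finset.mem_of_mem_erase he⟩
  · exact hon.2 (i := ⟨x, hxt⟩) (j := ⟨e, Finset.mem_of_mem_erase he⟩)
      (by simpa [eq_comm] using Finset.ne_of_mem_erase he)
  · have h := b.sum_sq_inner_left v
    rw [hb, Finset.sum_coe_sort t (fun e => ⟪v, e⟫ ^ 2), ← Finset.add_sum_erase t _ hxt] at h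
    linarith

variable {d : ℕ}

lemma matAct_mul (M N : Matrix (Fin d) (Fin d) ℝ) (v : EuclideanSpace ℝ (Fin d)) :
    matAct (M * N) v = matAct M (matAct N v) := by
  simp [matAct]

lemma inner_matAct_transpose (M : Matrix (Fin d) (Fin d) ℝ) (v w : EuclideanSpace ℝ (Fin d)) :
    ⟪matAct Mᵀ v, w⟫ = ⟪v, matAct M w⟫ := by
  rw [matAct, ← Matrix.conjTranspose_eq_transpose_of_trivial,
    Matrix.toEuclideanLin_conjTranspose_eq_adjoint, LinearMap.adjoint_inner_left, matAct]

lemma continuous_matAct (v : EuclideanSpace ℝ (Fin d)) :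
    Continuous fun M : Matrix (Fin d) (Fin d) ℝ => matAct M v := by
  simp only [matAct, Matrix.toLpLin_apply]
  fun_prop

lemma exists_matAct_eq_linearIsometryEquiv
    (f : EuclideanSpace ℝ (Fin d) ≃ₗᵢ[ℝ] EuclideanSpace ℝ (Fin d)) :
    ∃ M : O(d), ∀ v, matAct M v = f v := by
  let b := EuclideanSpace.basisFun (Fin d) ℝ
  refine ⟨⟨LinearMap.toMatrix b.toBasis b.toBasis f, f.toMatrix_mem_unitaryGroup b b⟩,
    fun v => ?_⟩
  simp [matAct, Matrix.toEuclideanLin_eq_toLin_orthonormal, b]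

lemma exists_matAct_fix_of_inner_eq {x u v : EuclideanSpace ℝ (Fin d)} (huv : ‖u‖ = ‖v‖)
    (hx : ⟪x, u⟫ = ⟪x, v⟫) : ∃ M : O(d), matAct M x = x ∧ matAct M u = v := by
  obtain ⟨M, hM⟩ := exists_matAct_eq_linearIsometryEquiv (ℝ ∙ (u - v))ᗮ.reflection
  refine ⟨M, ?_, by rw [hM, Submodule.reflection_sub huv]⟩
  rw [hM, Submodule.reflection_mem_subspace_eq_self]
  rw [Submodule.mem_orthogonal_singleton_iff_inner_right, inner_sub_left, real_inner_comm x u,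
    real_inner_comm x v, hx, sub_self]

def IsStabilizerEquivariant (X : O(d) → EuclideanSpace ℝ (Fin d))
    (x : EuclideanSpace ℝ (Fin d)) : Prop :=
  ∀ R M : O(d), matAct M x = x → X (R * M) = matAct (M : Matrix _ _ ℝ)ᵀ (X R)

lemma isStabilizerEquivariant_matAct_transpose
    (F : EuclideanSpace ℝ (Fin d) → EuclideanSpace ℝ (Fin d)) (x : EuclideanSpace ℝ (Fin d)) :
    IsStabilizerEquivariant (fun R : O(d) => matAct (R : Matrix _ _ ℝ)ᵀ (F (matAct R x))) x :=
  fun R M hM => by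
    dsimp only
    rw [Submonoid.coe_mul, Matrix.transpose_mul, matAct_mul, matAct_mul, hM]

lemma measurable_inner_matAct_transpose {F : EuclideanSpace ℝ (Fin d) → EuclideanSpace ℝ (Fin d)}
    (hF : Measurable F) (x v : EuclideanSpace ℝ (Fin d)) :
    Measurable fun R : O(d) => ⟪matAct (R : Matrix _ _ ℝ)ᵀ (F (matAct R x)), v⟫ := by
  have hact (w : EuclideanSpace ℝ (Fin d)) :
      Measurable fun R : O(d) => matAct (R : Matrix _ _ ℝ) w :=
    ((continuous_matAct w).comp continuous_subtype_val).measurable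
  simp only [inner_matAct_transpose]
  exact (hF.comp (hact x)).inner (hact v)

section Equivariant

variable {μ : Measure O(d)} [μ.IsMulRightInvariant]
  {X : O(d) → EuclideanSpace ℝ (Fin d)} {x : EuclideanSpace ℝ (Fin d)}

lemma integral_inner_matAct_sq_div (hX : IsStabilizerEquivariant X x) {M : O(d)}
    (hM : matAct M x = x) (v : EuclideanSpace ℝ (Fin d)) :
    ∫ R, ⟪X R, matAct M v⟫ ^ 2 / ⟪X R, x⟫ ^ 2 ∂μ = ∫ R, ⟪X R, v⟫ ^ 2 / ⟪X R, x⟫ ^ 2 ∂μ := by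
  conv_rhs => rw [← integral_mul_right_eq_self _ M]
  simp only [hX _ _ hM, inner_matAct_transpose, hM]

lemma integral_inner_sq_div_eq_of_inner_eq (hX : IsStabilizerEquivariant X x)
    {u v : EuclideanSpace ℝ (Fin d)} (huv : ‖u‖ = ‖v‖) (hxuv : ⟪x, u⟫ = ⟪x, v⟫) :
    ∫ R, ⟪X R, u⟫ ^ 2 / ⟪X R, x⟫ ^ 2 ∂μ = ∫ R, ⟪X R, v⟫ ^ 2 / ⟪X R, x⟫ ^ 2 ∂μ := by
  obtain ⟨M, hMx, hMu⟩ := exists_matAct_fix_of_inner_eq huv hxuv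
  rw [← hMu, integral_inner_matAct_sq_div hX hMx]

lemma integral_norm_sq_sub_inner_sq_div (hX : IsStabilizerEquivariant X x)
    (hXmeas : ∀ v, Measurable fun R => ⟪X R, v⟫)
    (hint : Integrable (fun R => (‖X R‖ ^ 2 - ⟪X R, x⟫ ^ 2) / ⟪X R, x⟫ ^ 2) μ) (hx : ‖x‖ = 1)
    {u : EuclideanSpace ℝ (Fin d)} (hu : ‖u‖ = 1) (hxu : ⟪x, u⟫ = 0) :
    ∫ R, (‖X R‖ ^ 2 - ⟪X R, x⟫ ^ 2) / ⟪X R, x⟫ ^ 2 ∂μ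
      = ((d : ℝ) - 1) * ∫ R, ⟪X R, u⟫ ^ 2 / ⟪X R, x⟫ ^ 2 ∂μ := by
  obtain ⟨s, hcard, hs, hsum⟩ := exists_finset_orthonormal_compl hx
  rw [finrank_euclideanSpace_fin] at hcard
  have hint_e : ∀ e ∈ s, Integrable (fun R => ⟪X R, e⟫ ^ 2 / ⟪X R, x⟫ ^ 2) μ := by
    refine fun e he => hint.mono' ((hXmeas e).pow_const 2 |>.div
      ((hXmeas x).pow_const 2)).aestronglyMeasurable (ae_of_all _ fun R => ?_)
    rw [Real.norm_of_nonneg (by positivity), ← hsum]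
    gcongr
    exact Finset.single_le_sum (fun e _ => sq_nonneg ⟪X R, e⟫) he
  calc ∫ R, (‖X R‖ ^ 2 - ⟪X R, x⟫ ^ 2) / ⟪X R, x⟫ ^ 2 ∂μ
      = ∫ R, ∑ e ∈ s, ⟪X R, e⟫ ^ 2 / ⟪X R, x⟫ ^ 2 ∂μ := by simp only [← Finset.sum_div, hsum]
    _ = ∑ e ∈ s, ∫ R, ⟪X R, e⟫ ^ 2 / ⟪X R, x⟫ ^ 2 ∂μ := integral_finsetSum s hint_e
    _ = ∑ _e ∈ s, ∫ R, ⟪X R, u⟫ ^ 2 / ⟪X R, x⟫ ^ 2 ∂μ := Finset.sum_congr rfl fun e he =>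
          integral_inner_sq_div_eq_of_inner_eq hX (by rw [(hs e he).1, hu])
            (by rw [(hs e he).2, hxu])
    _ = ((d : ℝ) - 1) * ∫ R, ⟪X R, u⟫ ^ 2 / ⟪X R, x⟫ ^ 2 ∂μ := by
          rw [Finset.sum_const, nsmul_eq_mul, hcard]

lemma sub_one_mul_integral_inner_sq_div (hX : IsStabilizerEquivariant X x)
    (hXmeas : ∀ v, Measurable fun R => ⟪X R, v⟫)
    (hint : Integrable (fun R => (‖X R‖ ^ 2 - ⟪X R, x⟫ ^ 2) / ⟪X R, x⟫ ^ 2) μ) (hx : ‖x‖ = 1)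
    {v : EuclideanSpace ℝ (Fin d)} (hxv : ⟪x, v⟫ = 0) :
    ((d : ℝ) - 1) * ∫ R, ⟪X R, v⟫ ^ 2 / ⟪X R, x⟫ ^ 2 ∂μ
      = ‖v‖ ^ 2 * ∫ R, (‖X R‖ ^ 2 - ⟪X R, x⟫ ^ 2) / ⟪X R, x⟫ ^ 2 ∂μ := by
  rcases eq_or_ne v 0 with rfl | hv
  · simp
  have hv' : ‖v‖ ≠ 0 := norm_ne_zero_iff.mpr hv
  rw [integral_norm_sq_sub_inner_sq_div hX hXmeas hint hx (u := ‖v‖⁻¹ • v)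
    (by rw [norm_smul, norm_inv, norm_norm, inv_mul_cancel₀ hv'])
    (by rw [real_inner_smul_right, hxv, mul_zero])]
  simp only [real_inner_smul_right, mul_pow, mul_div_assoc, integral_const_mul]
  field_simp

end Equivariant

theorem stmt2_general (d : ℕ) (hd : 2 ≤ d)
    (x y : EuclideanSpace ℝ (Fin d)) (hx : ‖x‖ = 1) (hy : ‖y‖ = 1)
    (F : EuclideanSpace ℝ (Fin d) → EuclideanSpace ℝ (Fin d))
    (hFmeas : Measurable F)
    -- `μ` is the Haar probability measure on the orthogonal group `O(d)`
    (μ : Measure (Matrix.orthogonalGroup (Fin d) ℝ))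
    (hprob : IsProbabilityMeasure μ)
    (hHaar : ∀ g : Matrix.orthogonalGroup (Fin d) ℝ,
      Measure.map (fun R => g * R) μ = μ)
    (xbar : Matrix.orthogonalGroup (Fin d) ℝ → EuclideanSpace ℝ (Fin d))
    (hxbar : ∀ R : Matrix.orthogonalGroup (Fin d) ℝ,
      xbar R = matAct ((R : Matrix (Fin d) (Fin d) ℝ)ᵀ)
        (F (matAct (R : Matrix (Fin d) (Fin d) ℝ) x)))
    (hnz : ∀ᵐ R ∂μ, ⟪xbar R, x⟫ ≠ 0)
    (hint : Integrable
      (fun R => (‖xbar R‖ ^ 2 - ⟪xbar R, x⟫ ^ 2) / ⟪xbar R, x⟫ ^ 2) μ) :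
    ∫ R, (⟪xbar R, y⟫ / ⟪xbar R, x⟫ - ⟪x, y⟫) ^ 2 ∂μ
      = ((1 - ⟪x, y⟫ ^ 2) / ((d : ℝ) - 1)) *
          ∫ R, (‖xbar R‖ ^ 2 - ⟪xbar R, x⟫ ^ 2) / ⟪xbar R, x⟫ ^ 2 ∂μ := by
  have : μ.IsMulLeftInvariant := ⟨hHaar⟩
  have := μ.isMulRightInvariant_of_isFiniteMeasure
  have hX : IsStabilizerEquivariant xbar x :=
    funext hxbar ▸ isStabilizerEquivariant_matAct_transpose F x
  have hXmeas : ∀ v, Measurable fun R => ⟪xbar R, v⟫ :=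
    funext hxbar ▸ measurable_inner_matAct_transpose hFmeas x
  set w := y - ⟪x, y⟫ • x
  have hxw : ⟪x, w⟫ = 0 := by
    rw [inner_sub_right, real_inner_smul_right, real_inner_self_eq_norm_sq, hx]
    ring
  have hw : ‖w‖ ^ 2 = 1 - ⟪x, y⟫ ^ 2 := by
    rw [norm_sub_sq_real, norm_smul, real_inner_smul_right, real_inner_comm, hx, hy,
      Real.norm_eq_abs, mul_one, sq_abs]
    ring
  have hd1 : (d : ℝ) - 1 ≠ 0 := by
    have : (2 : ℝ) ≤ d := by exact_mod_cast hd
    linarith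
  have hLHS : ∫ R, (⟪xbar R, y⟫ / ⟪xbar R, x⟫ - ⟪x, y⟫) ^ 2 ∂μ
      = ∫ R, ⟪xbar R, w⟫ ^ 2 / ⟪xbar R, x⟫ ^ 2 ∂μ :=
    integral_congr_ae <| hnz.mono fun R hR => by
      simp only [w, inner_sub_right, real_inner_smul_right]
      field_simp
  rw [hLHS, ← hw, div_mul_eq_mul_div,
    ← sub_one_mul_integral_inner_sq_div hX hXmeas hint hx hxw]
  field_simp

theorem stmt2 (d : ℕ) (hd : 2 ≤ d)
    (x y : EuclideanSpace ℝ (Fin d)) (hx : ‖x‖ = 1) (hy : ‖y‖ = 1)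
    (F : EuclideanSpace ℝ (Fin d) → EuclideanSpace ℝ (Fin d))
    (hFmeas : Measurable F) (hFbd : ∃ C : ℝ, ∀ v, ‖F v‖ ≤ C)
    -- `μ` is the Haar probability measure on the orthogonal group `O(d)`
    (μ : Measure (Matrix.orthogonalGroup (Fin d) ℝ))
    (hprob : IsProbabilityMeasure μ)
    (hHaar : ∀ g : Matrix.orthogonalGroup (Fin d) ℝ,
      Measure.map (fun R => g * R) μ = μ)
    (xbar : Matrix.orthogonalGroup (Fin d) ℝ → EuclideanSpace ℝ (Fin d))
    (hxbar : ∀ R : Matrix.orthogonalGroup (Fin d) ℝ,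
      xbar R = matAct ((R : Matrix (Fin d) (Fin d) ℝ)ᵀ)
        (F (matAct (R : Matrix (Fin d) (Fin d) ℝ) x)))
    (hnz : ∀ᵐ R ∂μ, ⟪xbar R, x⟫ ≠ 0)
    (hint : Integrable
      (fun R => (‖xbar R‖ ^ 2 - ⟪xbar R, x⟫ ^ 2) / ⟪xbar R, x⟫ ^ 2) μ) :
    ∫ R, (⟪xbar R, y⟫ / ⟪xbar R, x⟫ - ⟪x, y⟫) ^ 2 ∂μ
      = ((1 - ⟪x, y⟫ ^ 2) / ((d : ℝ) - 1)) *
          ∫ R, (‖xbar R‖ ^ 2 - ⟪xbar R, x⟫ ^ 2) / ⟪xbar R, x⟫ ^ 2 ∂μ :=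
  stmt2_general d hd x y hx hy F hFmeas μ hprob hHaar xbar hxbar hnz hint
end

section
/- Let d ≥ 2, let x ∈ S^{d−1}, let F : S^{d−1} → ℝ^d be a bounded measurable map, let R be a random d×d orthogonal matrix distributed according to the Haar probability measure on O(d), and set x̄ = Rᵀ F(Rx), ρ = ⟨x̄, x⟩, ψ = ‖x̄‖₂, and v = x̄ − ρ·x. Then for every w ∈ ℝ^d with ⟨w, x⟩ = 0 and every bounded measurable function g : ℝ² → ℝ, one has E[⟨v, w⟩ · g(ρ, ψ)] = 0 and E[⟨v, w⟩² · g(ρ, ψ)] = (‖w‖₂²/(d − 1)) · E[‖v‖₂² · g(ρ, ψ)]. -/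
open MeasureTheory
open scoped RealInnerProductSpace Matrix

/-!
Haar measure on `O(d)` is also right-invariant, and replacing `R` by `R Q` for an orthogonal `Q`
fixing `x` replaces `x̄` by `Qᵀ x̄` and leaves `ρ` and `ψ` unchanged. Hence the law of `x̄` is
invariant under the stabiliser of `x`. For `u, u'` orthogonal to `x` with `‖u‖ = ‖u'‖`, the
reflection in the hyperplane `(u - u')ᗮ` fixes `x` and maps `u` to `u'`. With `u' = -w` this makes
the first moment odd, hence zero. With `u' = ‖w‖ bᵢ` it shows that on `xᗮ` the second moment is
`‖w‖²` times a constant; summing over an orthonormal basis `(bᵢ)` of `xᗮ`, Parseval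
(`∑ ⟪x̄, bᵢ⟫² = ‖v‖²`) identifies the constant as `E[‖v‖² g(ρ, ψ)] / (d - 1)`.
Throughout, `⟪v, w⟫ = ⟪x̄, w⟫` because `w ⊥ x`.
-/

theorem MeasureTheory.Measure.isMulRightInvariant_of_isMulLeftInvariant {G : Type*} [Group G]
    [MeasurableSpace G] [MeasurableMul₂ G] [MeasurableInv G] (μ : Measure G) [IsFiniteMeasure μ]
    [IsMulLeftInvariant μ] : IsMulRightInvariant μ := by
  refine ⟨fun g => ?_⟩
  rcases eq_zero_or_neZero μ with rfl | hμ
  · simp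
  -- the right translate of `μ` is left-invariant with the same mass, so uniqueness of
  -- left-invariant measures identifies it with `μ`
  have : IsMulLeftInvariant (μ.map (· * g)) := ⟨fun h => by
    rw [map_map (measurable_const_mul h) (measurable_mul_const g)]
    conv_rhs =>
      rw [← map_mul_left_eq_self μ h, map_map (measurable_mul_const g) (measurable_const_mul h)]
    simp only [Function.comp_def, mul_assoc]⟩
  have hμ0 : μ Set.univ ≠ 0 := by simp [NeZero.ne μ]
  rw [measure_eq_div_smul (μ.map (· * g)) μ hμ0 (measure_ne_top μ _),
    map_apply (measurable_mul_const g) MeasurableSet.univ, Set.preimage_univ,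
    ENNReal.div_self hμ0 (measure_ne_top μ _), one_smul]

variable {E : Type*} [NormedAddCommGroup E] [InnerProductSpace ℝ E]

theorem exists_linearIsometryEquiv_apply_eq {x u u' : E} (hu : ‖u‖ = ‖u'‖)
    (hx : ⟪u, x⟫ = ⟪u', x⟫) : ∃ L : E ≃ₗᵢ[ℝ] E, L x = x ∧ L u = u' := by
  refine ⟨(ℝ ∙ (u - u'))ᗮ.reflection, Submodule.reflection_mem_subspace_eq_self ?_,
    Submodule.reflection_sub hu⟩
  rw [Submodule.mem_orthogonal_singleton_iff_inner_right, inner_sub_left, hx, sub_self]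

theorem norm_sub_inner_smul_sq_eq_sum {ι : Type*} [Fintype ι] {x : E} (hx : ‖x‖ = 1)
    (b : OrthonormalBasis ι ℝ (ℝ ∙ x)ᗮ) (y : E) :
    ‖y - ⟪y, x⟫ • x‖ ^ 2 = ∑ i, ⟪y, b i⟫ ^ 2 := by
  have hp : y - ⟪y, x⟫ • x ∈ (ℝ ∙ x)ᗮ := by
    rw [Submodule.mem_orthogonal_singleton_iff_inner_left, inner_sub_left, real_inner_smul_left,
      real_inner_self_eq_norm_sq, hx]
    ring
  rw [show ‖y - ⟪y, x⟫ • x‖ = ‖(⟨_, hp⟩ : (ℝ ∙ x)ᗮ)‖ from rfl, ← b.sum_sq_inner_left]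
  refine Finset.sum_congr rfl fun i _ => ?_
  have hbi : ⟪x, (b i : E)⟫ = 0 := Submodule.mem_orthogonal_singleton_iff_inner_right.mp (b i).2
  rw [Submodule.coe_inner, inner_sub_left, real_inner_smul_left, hbi, mul_zero, sub_zero]

section StabilizerInvariant

variable {Ω : Type*} [MeasurableSpace Ω] {μ : Measure Ω} {X : Ω → E} {x : E}

def IsStabilizerInvariant (μ : Measure Ω) (X : Ω → E) (x : E) : Prop :=
  ∀ L : E ≃ₗᵢ[ℝ] E, L x = x → ∀ f : E → ℝ, ∫ ω, f (L (X ω)) ∂μ = ∫ ω, f (X ω) ∂μ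

theorem integral_inner_smul_sq_mul (c : ℝ) (w : E) (g : ℝ × ℝ → ℝ) :
    ∫ ω, ⟪X ω, c • w⟫ ^ 2 * g (⟪X ω, x⟫, ‖X ω‖) ∂μ
      = c ^ 2 * ∫ ω, ⟪X ω, w⟫ ^ 2 * g (⟪X ω, x⟫, ‖X ω‖) ∂μ := by
  simp_rw [real_inner_smul_right, mul_pow, mul_assoc]
  exact integral_const_mul _ _

theorem integrable_inner_sq_mul [MeasurableSpace E] [BorelSpace E] [IsFiniteMeasure μ]
    (hXm : Measurable X) (hXb : ∃ C, ∀ ω, ‖X ω‖ ≤ C) {g : ℝ × ℝ → ℝ} (hgm : Measurable g)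
    (hgb : ∃ C, ∀ q, |g q| ≤ C) (w : E) :
    Integrable (fun ω => ⟪X ω, w⟫ ^ 2 * g (⟪X ω, x⟫, ‖X ω‖)) μ := by
  obtain ⟨C, hC⟩ := hXb
  obtain ⟨Cg, hCg⟩ := hgb
  refine .of_bound (Measurable.aestronglyMeasurable (by fun_prop)) ((C * ‖w‖) ^ 2 * Cg)
    (.of_forall fun ω => ?_)
  rw [norm_mul, norm_pow, Real.norm_eq_abs, Real.norm_eq_abs]
  gcongr
  · exact (abs_real_inner_le_norm _ _).trans (by gcongr; exact hC ω)
  · exact hCg _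

namespace IsStabilizerInvariant

theorem integral_inner_map (hX : IsStabilizerInvariant μ X x) {L : E ≃ₗᵢ[ℝ] E} (hL : L x = x)
    (w : E) (φ : ℝ → ℝ × ℝ → ℝ) :
    ∫ ω, φ ⟪X ω, L w⟫ (⟪X ω, x⟫, ‖X ω‖) ∂μ = ∫ ω, φ ⟪X ω, w⟫ (⟪X ω, x⟫, ‖X ω‖) ∂μ := by
  have hL' : L.symm x = x := by rw [L.symm_apply_eq, hL]
  have h := hX L.symm hL' fun y => φ ⟪y, w⟫ (⟪y, x⟫, ‖y‖)
  simp only [LinearIsometryEquiv.inner_map_eq_flip, LinearIsometryEquiv.symm_symm, hL,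
    LinearIsometryEquiv.norm_map] at h
  exact h

theorem integral_inner_mul_eq_zero (hX : IsStabilizerInvariant μ X x) {w : E} (hw : ⟪w, x⟫ = 0)
    (g : ℝ × ℝ → ℝ) : ∫ ω, ⟪X ω, w⟫ * g (⟪X ω, x⟫, ‖X ω‖) ∂μ = 0 := by
  obtain ⟨L, hLx, hLw⟩ := exists_linearIsometryEquiv_apply_eq (norm_neg w).symm
    (by rw [inner_neg_left, hw, neg_zero] : ⟪w, x⟫ = ⟪-w, x⟫)
  have h := hX.integral_inner_map hLx w fun t q => t * g q
  simp only [hLw, inner_neg_right, neg_mul, integral_neg] at h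
  linarith

theorem integral_inner_sq_mul [MeasurableSpace E] [BorelSpace E] [IsFiniteMeasure μ]
    (hX : IsStabilizerInvariant μ X x) (hXm : Measurable X) (hXb : ∃ C, ∀ ω, ‖X ω‖ ≤ C)
    (hE : 2 ≤ Module.finrank ℝ E) (hx : ‖x‖ = 1) {w : E} (hw : ⟪w, x⟫ = 0) {g : ℝ × ℝ → ℝ}
    (hgm : Measurable g) (hgb : ∃ C, ∀ q, |g q| ≤ C) :
    ∫ ω, ⟪X ω, w⟫ ^ 2 * g (⟪X ω, x⟫, ‖X ω‖) ∂μ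
      = ‖w‖ ^ 2 / ((Module.finrank ℝ E : ℝ) - 1)
        * ∫ ω, ‖X ω - ⟪X ω, x⟫ • x‖ ^ 2 * g (⟪X ω, x⟫, ‖X ω‖) ∂μ := by
  set M : E → ℝ := fun u => ∫ ω, ⟪X ω, u⟫ ^ 2 * g (⟪X ω, x⟫, ‖X ω‖) ∂μ
  obtain ⟨n, hn⟩ : ∃ n, Module.finrank ℝ E = n + 1 := ⟨_, (Nat.sub_add_cancel (by omega)).symm⟩
  have : Fact (Module.finrank ℝ E = n + 1) := ⟨hn⟩
  let b := OrthonormalBasis.fromOrthogonalSpanSingleton (𝕜 := ℝ) n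
    (norm_ne_zero_iff.mp (hx ▸ one_ne_zero))
  have hb : ∀ i, ⟪(b i : E), x⟫ = 0 := fun i =>
    Submodule.mem_orthogonal_singleton_iff_inner_left.mp (b i).2
  have hMw : ∀ i, M w = ‖w‖ ^ 2 * M (b i) := fun i => by
    obtain ⟨L, hLx, hLw⟩ := exists_linearIsometryEquiv_apply_eq (u := w) (u' := ‖w‖ • (b i : E))
      (by rw [norm_smul, norm_norm, show ‖(b i : E)‖ = 1 from b.orthonormal.1 i, mul_one])
      (by rw [hw, real_inner_smul_left, hb, mul_zero])
    rw [← integral_inner_smul_sq_mul, ← hLw]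
    exact (hX.integral_inner_map hLx w fun t q => t ^ 2 * g q).symm
  have hsum : ∫ ω, ‖X ω - ⟪X ω, x⟫ • x‖ ^ 2 * g (⟪X ω, x⟫, ‖X ω‖) ∂μ = ∑ i, M (b i) := by
    simp_rw [norm_sub_inner_smul_sq_eq_sum hx b, Finset.sum_mul]
    exact integral_finsetSum _ fun i _ => integrable_inner_sq_mul hXm hXb hgm hgb _
  have hn0 : (n : ℝ) ≠ 0 := by exact_mod_cast (by omega : n ≠ 0)
  rw [hsum, hn, Nat.cast_succ, add_sub_cancel_right, div_mul_eq_mul_div, Finset.mul_sum]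
  simp_rw [← hMw]
  rw [Finset.sum_const, Finset.card_univ, Fintype.card_fin, nsmul_eq_mul]
  field_simp
  rfl

end IsStabilizerInvariant
end StabilizerInvariant

instance inst_s3 {n : Type*} [Fintype n] : BorelSpace (Matrix n n ℝ) :=
  inferInstanceAs (BorelSpace (n → n → ℝ))

instance {n : Type*} [Fintype n] : SecondCountableTopology (Matrix n n ℝ) :=
  inferInstanceAs (SecondCountableTopology (n → n → ℝ))

instance inst_s3_2 {n : Type*} [Fintype n] [DecidableEq n] :
    SecondCountableTopology (Matrix.orthogonalGroup n ℝ) :=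
  inferInstanceAs (SecondCountableTopology (Matrix.orthogonalGroup n ℝ : Set (Matrix n n ℝ)))

namespace Matrix.orthogonalGroup

variable {n : Type*} [Fintype n] [DecidableEq n]

noncomputable def toLinearIsometryEquiv :
    orthogonalGroup n ℝ ≃* (EuclideanSpace ℝ n ≃ₗᵢ[ℝ] EuclideanSpace ℝ n) :=
  (Unitary.mapEquiv
    { (toEuclideanCLM (n := n) (𝕜 := ℝ)).toRingEquiv.toMulEquiv with
      map_star' := map_star (toEuclideanCLM (n := n) (𝕜 := ℝ)) }).toMulEquiv.trans
    Unitary.linearIsometryEquiv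

theorem toLinearIsometryEquiv_apply (R : orthogonalGroup n ℝ) (y : EuclideanSpace ℝ n) :
    toLinearIsometryEquiv R y = toEuclideanLin (R : Matrix n n ℝ) y :=
  congrArg (· y) (coe_toEuclideanCLM_eq_toEuclideanLin (R : Matrix n n ℝ))

theorem toLinearIsometryEquiv_inv_apply (R : orthogonalGroup n ℝ) (y : EuclideanSpace ℝ n) :
    toLinearIsometryEquiv R⁻¹ y = toEuclideanLin (R : Matrix n n ℝ)ᵀ y := by
  rw [toLinearIsometryEquiv_apply, UnitaryGroup.inv_val, star_eq_conjTranspose,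
    conjTranspose_eq_transpose_of_trivial]

theorem continuous_toLinearIsometryEquiv_apply :
    Continuous fun p : orthogonalGroup n ℝ × EuclideanSpace ℝ n =>
      toLinearIsometryEquiv p.1 p.2 := by
  simp_rw [toLinearIsometryEquiv_apply]
  exact (by fun_prop : Continuous fun p : orthogonalGroup n ℝ × EuclideanSpace ℝ n =>
    WithLp.toLp 2 ((p.1 : Matrix n n ℝ) *ᵥ WithLp.ofLp p.2))

theorem isStabilizerInvariant_conjugate (μ : Measure (orthogonalGroup n ℝ))
    [μ.IsMulRightInvariant] (F : EuclideanSpace ℝ n → EuclideanSpace ℝ n)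
    (x : EuclideanSpace ℝ n) :
    IsStabilizerInvariant μ
      (fun R => toLinearIsometryEquiv R⁻¹ (F (toLinearIsometryEquiv R x))) x := by
  intro L hL f
  have hL' : L.symm x = x := by rw [L.symm_apply_eq, hL]
  set Q := (toLinearIsometryEquiv.symm L)⁻¹
  have hQ : ∀ R, toLinearIsometryEquiv (R * Q)⁻¹ (F (toLinearIsometryEquiv (R * Q) x))
      = L (toLinearIsometryEquiv R⁻¹ (F (toLinearIsometryEquiv R x))) := fun R => by
    simp only [Q, _root_.mul_inv_rev, inv_inv, map_mul, map_inv, MulEquiv.apply_symm_apply,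
      LinearIsometryEquiv.coe_mul, Function.comp_apply, LinearIsometryEquiv.coe_inv, hL']
  simp_rw [← hQ]
  exact integral_mul_right_eq_self
    (fun R => f (toLinearIsometryEquiv R⁻¹ (F (toLinearIsometryEquiv R x)))) Q

theorem measurable_conjugate {F : EuclideanSpace ℝ n → EuclideanSpace ℝ n} (hF : Measurable F)
    (x : EuclideanSpace ℝ n) :
    Measurable fun R => toLinearIsometryEquiv R⁻¹ (F (toLinearIsometryEquiv R x)) :=
  have hc := continuous_toLinearIsometryEquiv_apply (n := n)
  hc.measurable2 (c := fun R y => toLinearIsometryEquiv R y) measurable_inv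
    (hF.comp (hc.measurable2 (c := fun R y => toLinearIsometryEquiv R y) measurable_id
      measurable_const))

end Matrix.orthogonalGroup

section matAct

open Matrix.orthogonalGroup

variable {d : ℕ}

theorem matAct_transpose_matAct_eq (R : Matrix.orthogonalGroup (Fin d) ℝ)
    (F : EuclideanSpace ℝ (Fin d) → EuclideanSpace ℝ (Fin d)) (x : EuclideanSpace ℝ (Fin d)) :
    matAct (R : Matrix (Fin d) (Fin d) ℝ)ᵀ (F (matAct R x))
      = toLinearIsometryEquiv R⁻¹ (F (toLinearIsometryEquiv R x)) := by
  rw [matAct, matAct, toLinearIsometryEquiv_inv_apply, toLinearIsometryEquiv_apply]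

theorem norm_matAct_transpose (R : Matrix.orthogonalGroup (Fin d) ℝ)
    (y : EuclideanSpace ℝ (Fin d)) : ‖matAct (R : Matrix (Fin d) (Fin d) ℝ)ᵀ y‖ = ‖y‖ := by
  rw [matAct, ← toLinearIsometryEquiv_inv_apply, LinearIsometryEquiv.norm_map]

theorem isStabilizerInvariant_matAct (μ : Measure (Matrix.orthogonalGroup (Fin d) ℝ))
    [μ.IsMulRightInvariant] (F : EuclideanSpace ℝ (Fin d) → EuclideanSpace ℝ (Fin d))
    (x : EuclideanSpace ℝ (Fin d)) :
    IsStabilizerInvariant μ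
      (fun R => matAct (R : Matrix (Fin d) (Fin d) ℝ)ᵀ (F (matAct R x))) x := by
  simpa only [matAct_transpose_matAct_eq] using isStabilizerInvariant_conjugate μ F x

theorem measurable_matAct {F : EuclideanSpace ℝ (Fin d) → EuclideanSpace ℝ (Fin d)}
    (hF : Measurable F) (x : EuclideanSpace ℝ (Fin d)) :
    Measurable fun R : Matrix.orthogonalGroup (Fin d) ℝ =>
      matAct (R : Matrix (Fin d) (Fin d) ℝ)ᵀ (F (matAct R x)) := by
  simpa only [matAct_transpose_matAct_eq] using measurable_conjugate hF x

end matAct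

theorem stmt3 (d : ℕ) (hd : 2 ≤ d)
    (x : EuclideanSpace ℝ (Fin d)) (hx : ‖x‖ = 1)
    (F : EuclideanSpace ℝ (Fin d) → EuclideanSpace ℝ (Fin d))
    (hFmeas : Measurable F) (hFbd : ∃ C : ℝ, ∀ v, ‖F v‖ ≤ C)
    -- `μ` is the Haar probability measure on the orthogonal group `O(d)`
    (μ : Measure (Matrix.orthogonalGroup (Fin d) ℝ))
    (hprob : IsProbabilityMeasure μ)
    (hHaar : ∀ g : Matrix.orthogonalGroup (Fin d) ℝ,
      Measure.map (fun R => g * R) μ = μ)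
    (xbar : Matrix.orthogonalGroup (Fin d) ℝ → EuclideanSpace ℝ (Fin d))
    (hxbar : ∀ R : Matrix.orthogonalGroup (Fin d) ℝ,
      xbar R = matAct ((R : Matrix (Fin d) (Fin d) ℝ)ᵀ)
        (F (matAct (R : Matrix (Fin d) (Fin d) ℝ) x)))
    (ρ : Matrix.orthogonalGroup (Fin d) ℝ → ℝ) (hρ : ∀ R, ρ R = ⟪xbar R, x⟫)
    (ψ : Matrix.orthogonalGroup (Fin d) ℝ → ℝ) (hψ : ∀ R, ψ R = ‖xbar R‖)
    (v : Matrix.orthogonalGroup (Fin d) ℝ → EuclideanSpace ℝ (Fin d))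
    (hv : ∀ R, v R = xbar R - ρ R • x)
    (w : EuclideanSpace ℝ (Fin d)) (hw : ⟪w, x⟫ = 0)
    (g : ℝ × ℝ → ℝ) (hgmeas : Measurable g) (hgbd : ∃ C : ℝ, ∀ q, |g q| ≤ C) :
    ∫ R, ⟪v R, w⟫ * g (ρ R, ψ R) ∂μ = 0 ∧
    ∫ R, ⟪v R, w⟫ ^ 2 * g (ρ R, ψ R) ∂μ
      = (‖w‖ ^ 2 / ((d : ℝ) - 1)) * ∫ R, ‖v R‖ ^ 2 * g (ρ R, ψ R) ∂μ := by
  have : μ.IsMulLeftInvariant := ⟨hHaar⟩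
  have : μ.IsMulRightInvariant := μ.isMulRightInvariant_of_isMulLeftInvariant
  have hX : IsStabilizerInvariant μ xbar x := funext hxbar ▸ isStabilizerInvariant_matAct μ F x
  have hXm : Measurable xbar := funext hxbar ▸ measurable_matAct hFmeas x
  have hXb : ∃ C, ∀ R, ‖xbar R‖ ≤ C := by
    obtain ⟨C, hC⟩ := hFbd
    exact ⟨C, fun R => by rw [hxbar, norm_matAct_transpose]; exact hC _⟩
  have hvw : ∀ R, ⟪v R, w⟫ = ⟪xbar R, w⟫ := fun R => by
    rw [hv, inner_sub_left, real_inner_smul_left, real_inner_comm w x, hw, mul_zero, sub_zero]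
  simp only [hvw, hρ, hψ]
  simp only [hv, hρ]
  refine ⟨hX.integral_inner_mul_eq_zero hw g, ?_⟩
  rw [hX.integral_inner_sq_mul hXm hXb (by rwa [finrank_euclideanSpace_fin]) hx hw hgmeas hgbd,
    finrank_euclideanSpace_fin]
end

section
/- Let d ≥ 1 and b ≥ 1 be integers. Let G_b = {−(2^b − 1)/2 + k : k = 0, 1, …, 2^b − 1}^d ⊂ ℝ^d be the centered uniform grid (every element of G_b is nonzero since all its entries are nonzero half-integers). Define Q_b : ℝ → ℝ by Q_b(u) = sgn(u) · min(⌊|u|⌋ + 1/2, 2^{b−1} − 1/2), with the convention sgn(0) = 1. Then for every z ∈ S^{d−1}: inf over t > 0 and g ∈ G_b of ‖z − t·g‖₂² equals 1 − max over g ∈ G_b of ⟨z, g/‖g‖₂⟩², and both equal inf over α > 0 of (1/d) · Σ_{j=1}^{d} (√d·z_j − α·Q_b(√d·z_j/α))². -/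
/-!
Writing `ĝ = ‖g‖⁻¹ • g`, completing the square gives
`‖z - t • g‖² = ‖z‖² - ⟪z, ĝ⟫² + (t‖g‖ - ⟪z, ĝ⟫)²`, so over `t ≥ 0` the smallest value is
`‖z‖² - ⟪z, ĝ⟫²` as soon as `⟪z, g⟫ ≥ 0`; the grid is symmetric, so `g` may always be replaced
by `-g`, which gives the first identity.

For the second, the substitution `α = √d t` turns `‖z - t • g‖²` into
`(1/d) ∑ⱼ (√d zⱼ - α gⱼ)²`. The grid is a product of one-dimensional levels and `Q_b` rounds to a
nearest level, so for fixed `α` the minimum over `g` is attained coordinatewise at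
`gⱼ = Q_b(√d zⱼ / α)`.
-/

open scoped RealInnerProductSpace

/-- The centered uniform grid `G_b = {-(2^b-1)/2 + k : k = 0,…,2^b-1}^d ⊂ ℝ^d`. -/
def gridSet (d b : ℕ) : Set (EuclideanSpace ℝ (Fin d)) :=
  {g | ∀ j : Fin d, ∃ k : ℕ, k < 2 ^ b ∧ g j = -(((2 : ℝ) ^ b - 1) / 2) + (k : ℝ)}

/-- The scalar quantizer `Q_b(u) = sgn(u) · min(⌊|u|⌋ + 1/2, 2^{b-1} - 1/2)`, with the
convention `sgn 0 = 1`. -/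
noncomputable def Qb (b : ℕ) (u : ℝ) : ℝ :=
  (if u < 0 then (-1 : ℝ) else 1) * min ((⌊|u|⌋ : ℝ) + 1 / 2) ((2 : ℝ) ^ (b - 1) - 1 / 2)

section ConeDistance

variable {E : Type*} [NormedAddCommGroup E] [InnerProductSpace ℝ E]

lemma norm_sub_smul_sq_eq (z g : E) (t : ℝ) :
    ‖z - t • g‖ ^ 2 = ‖z‖ ^ 2 - ⟪z, ‖g‖⁻¹ • g⟫ ^ 2 + (t * ‖g‖ - ⟪z, g⟫ / ‖g‖) ^ 2 := by
  -- at `g = 0` both sides are `‖z‖ ^ 2`, through `‖0‖⁻¹ = 0` and `x / 0 = 0`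
  rcases eq_or_ne g 0 with rfl | hg
  · simp
  have hn : ‖g‖ ≠ 0 := norm_ne_zero_iff.2 hg
  rw [norm_sub_sq_real, real_inner_smul_right, real_inner_smul_right, norm_smul,
    Real.norm_eq_abs, mul_pow, sq_abs]
  field_simp
  ring

/-- `t = 0` is allowed, by continuity: the optimal `t = ⟪z, g⟫ / ‖g‖ ^ 2` vanishes when `z ⟂ g`. -/
lemma sInf_norm_sub_smul_sq_le {G : Set E} {g : E} (hg : g ∈ G) (z : E) {t : ℝ} (ht : 0 ≤ t) :
    sInf {v : ℝ | ∃ t : ℝ, 0 < t ∧ ∃ g ∈ G, v = ‖z - t • g‖ ^ 2} ≤ ‖z - t • g‖ ^ 2 := by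
  have hbdd : BddBelow {v : ℝ | ∃ t : ℝ, 0 < t ∧ ∃ g ∈ G, v = ‖z - t • g‖ ^ 2} :=
    ⟨0, by rintro _ ⟨_, _, _, _, rfl⟩; positivity⟩
  have hcont : Continuous fun s : ℝ => ‖z - s • g‖ ^ 2 := by fun_prop
  refine ContinuousWithinAt.closure_le (s := Set.Ioi 0) (x := t) (by rwa [closure_Ioi])
    continuousWithinAt_const hcont.continuousWithinAt ?_
  exact fun s hs => csInf_le hbdd ⟨s, hs, g, hg, rfl⟩

theorem sInf_norm_sub_smul_sq_eq_sub_sSup {G : Set E} (hfin : G.Finite) (hne : G.Nonempty)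
    (hneg : ∀ g ∈ G, -g ∈ G) (z : E) :
    sInf {v : ℝ | ∃ t : ℝ, 0 < t ∧ ∃ g ∈ G, v = ‖z - t • g‖ ^ 2}
      = ‖z‖ ^ 2 - sSup {v : ℝ | ∃ g ∈ G, v = ⟪z, ‖g‖⁻¹ • g⟫ ^ 2} := by
  set T := {v : ℝ | ∃ g ∈ G, v = ⟪z, ‖g‖⁻¹ • g⟫ ^ 2}
  have hTfin : T.Finite := (hfin.image fun g => ⟪z, ‖g‖⁻¹ • g⟫ ^ 2).subset
    (by rintro _ ⟨g, hg, rfl⟩; exact ⟨g, hg, rfl⟩)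
  obtain ⟨g, hg, hinner, hmax⟩ : ∃ g ∈ G, 0 ≤ ⟪z, g⟫ ∧ sSup T = ⟪z, ‖g‖⁻¹ • g⟫ ^ 2 := by
    obtain ⟨g, hg, hgmax⟩ : sSup T ∈ T :=
      Set.Nonempty.csSup_mem (hne.elim fun g hg => ⟨_, g, hg, rfl⟩) hTfin
    rcases le_total 0 ⟪z, g⟫ with h | h
    · exact ⟨g, hg, h, hgmax⟩
    · exact ⟨-g, hneg g hg, by simpa [inner_neg_right] using h, by simp [hgmax, inner_neg_right]⟩
  apply le_antisymm
  · calc _ ≤ ‖z - (⟪z, g⟫ / ‖g‖ ^ 2) • g‖ ^ 2 := sInf_norm_sub_smul_sq_le hg z (by positivity)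
      _ = ‖z‖ ^ 2 - sSup T := by
        rw [norm_sub_smul_sq_eq, hmax]
        rcases eq_or_ne ‖g‖ 0 with h | h
        · simp [h]
        · field_simp; ring
  · refine le_csInf ⟨_, 1, one_pos, g, hg, rfl⟩ ?_
    rintro _ ⟨t, -, g', hg', rfl⟩
    have := le_csSup hTfin.bddAbove ⟨g', hg', rfl⟩
    rw [norm_sub_smul_sq_eq]
    nlinarith [sq_nonneg (t * ‖g'‖ - ⟪z, g'⟫ / ‖g'‖)]

end ConeDistance

section NearestPointQuantizer

def IsNearestPointMap (L : Set ℝ) (q : ℝ → ℝ) : Prop :=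
  ∀ u, q u ∈ L ∧ ∀ c ∈ L, |u - q u| ≤ |u - c|

variable {ι : Type*} [Fintype ι]

lemma norm_sub_smul_sq_eq_sum (z g : EuclideanSpace ℝ ι) (t : ℝ) {s : ℝ} (hs : s ≠ 0) :
    ‖z - t • g‖ ^ 2 = 1 / s ^ 2 * ∑ j, (s * z j - s * t * g j) ^ 2 := by
  rw [EuclideanSpace.real_norm_sq_eq, Finset.mul_sum]
  refine Finset.sum_congr rfl fun j _ => ?_
  simp only [PiLp.sub_apply, PiLp.smul_apply, smul_eq_mul]
  field_simp

lemma IsNearestPointMap.sq_sub_mul_le {L : Set ℝ} {q : ℝ → ℝ} (hq : IsNearestPointMap L q)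
    {α : ℝ} (hα : 0 < α) (x : ℝ) {c : ℝ} (hc : c ∈ L) :
    (x - α * q (x / α)) ^ 2 ≤ (x - α * c) ^ 2 := by
  have hscale : ∀ y, x - α * y = α * (x / α - y) := fun y => by field_simp
  rw [sq_le_sq, hscale, hscale, abs_mul, abs_mul]
  exact mul_le_mul_of_nonneg_left ((hq _).2 c hc) (abs_nonneg α)

theorem sInf_norm_sub_smul_sq_eq_sInf_sum {L : Set ℝ} {q : ℝ → ℝ} (hq : IsNearestPointMap L q)
    {s : ℝ} (hs : 0 < s) (z : EuclideanSpace ℝ ι) :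
    sInf {v : ℝ | ∃ t : ℝ, 0 < t ∧ ∃ g ∈ {g : EuclideanSpace ℝ ι | ∀ j, g j ∈ L},
        v = ‖z - t • g‖ ^ 2}
      = sInf {v : ℝ | ∃ α : ℝ, 0 < α ∧
          v = 1 / s ^ 2 * ∑ j, (s * z j - α * q (s * z j / α)) ^ 2} := by
  apply le_antisymm
  · refine le_csInf ⟨_, 1, one_pos, rfl⟩ ?_
    rintro _ ⟨α, hα, rfl⟩
    refine csInf_le ⟨0, by rintro _ ⟨_, _, _, _, rfl⟩; positivity⟩
      ⟨α / s, div_pos hα hs, WithLp.toLp 2 fun j => q (s * z j / α), fun j => (hq _).1, ?_⟩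
    rw [norm_sub_smul_sq_eq_sum _ _ _ hs.ne', mul_div_cancel₀ _ hs.ne']
  · refine le_csInf ⟨_, 1, one_pos, WithLp.toLp 2 fun _ => q 0, fun _ => (hq 0).1, rfl⟩ ?_
    rintro _ ⟨t, ht, g, hg, rfl⟩
    have hbdd : BddBelow {v : ℝ | ∃ α : ℝ, 0 < α ∧
        v = 1 / s ^ 2 * ∑ j, (s * z j - α * q (s * z j / α)) ^ 2} :=
      ⟨0, by rintro _ ⟨_, _, rfl⟩; positivity⟩
    refine (csInf_le hbdd ⟨s * t, mul_pos hs ht, rfl⟩).trans ?_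
    rw [norm_sub_smul_sq_eq_sum _ _ _ hs.ne']
    exact mul_le_mul_of_nonneg_left
      (Finset.sum_le_sum fun j _ => hq.sq_sub_mul_le (mul_pos hs ht) _ (hg j)) (by positivity)

end NearestPointQuantizer

def gridLevels (b : ℕ) : Set ℝ :=
  {x | ∃ k : ℕ, k < 2 ^ b ∧ x = -(((2 : ℝ) ^ b - 1) / 2) + k}

lemma gridLevels_finite (b : ℕ) : (gridLevels b).Finite :=
  ((Set.finite_Iio (2 ^ b)).image fun k : ℕ => -(((2 : ℝ) ^ b - 1) / 2) + k).subset
    (by rintro _ ⟨k, hk, rfl⟩; exact ⟨k, hk, rfl⟩)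

lemma neg_mem_gridLevels {b : ℕ} {x : ℝ} (hx : x ∈ gridLevels b) : -x ∈ gridLevels b := by
  obtain ⟨k, hk, rfl⟩ := hx
  refine ⟨2 ^ b - 1 - k, by omega, ?_⟩
  rw [Nat.cast_sub (by omega), Nat.cast_sub Nat.one_le_two_pow]
  push_cast
  ring

lemma mem_gridLevels_succ_iff {n : ℕ} {x : ℝ} :
    x ∈ gridLevels (n + 1) ↔ ∃ j : ℤ, -2 ^ n ≤ j ∧ j < 2 ^ n ∧ x = j + 1 / 2 := by
  constructor
  · rintro ⟨k, hk, rfl⟩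
    refine ⟨k - 2 ^ n, by omega, ?_, by push_cast; ring⟩
    have : (k : ℤ) < 2 ^ (n + 1) := by exact_mod_cast hk
    rw [pow_succ] at this
    omega
  · rintro ⟨j, hj₁, hj₂, rfl⟩
    lift j + 2 ^ n to ℕ using (by omega) with k hk
    refine ⟨k, ?_, ?_⟩
    · have : (k : ℤ) < 2 ^ (n + 1) := by rw [pow_succ]; omega
      exact_mod_cast this
    · have : (k : ℝ) = j + 2 ^ n := by exact_mod_cast hk
      rw [this]; ring

lemma abs_sub_min_floor_add_half_le (u : ℝ) {M j : ℤ} (hj : j ≤ M) :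
    |u - ((min ⌊u⌋ M : ℤ) + 1 / 2)| ≤ |u - (j + 1 / 2)| := by
  have hmu : ((min ⌊u⌋ M : ℤ) : ℝ) ≤ u := (Int.cast_le.2 (min_le_left _ _)).trans (Int.floor_le u)
  rw [← sq_le_sq]
  rcases lt_trichotomy j (min ⌊u⌋ M) with hjm | hjm | hmj
  · have : (j : ℝ) + 1 ≤ (min ⌊u⌋ M : ℤ) := by exact_mod_cast hjm
    nlinarith
  · rw [hjm]
  · have hm : min ⌊u⌋ M = ⌊u⌋ := min_eq_left (by omega)
    have : ((min ⌊u⌋ M : ℤ) : ℝ) + 1 ≤ j := by exact_mod_cast hmj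
    have : u < ((min ⌊u⌋ M : ℤ) : ℝ) + 1 := by rw [hm]; exact Int.lt_floor_add_one u
    nlinarith

lemma Qb_succ_of_nonneg (n : ℕ) {u : ℝ} (hu : 0 ≤ u) :
    Qb (n + 1) u = ((min ⌊u⌋ (2 ^ n - 1) : ℤ) : ℝ) + 1 / 2 := by
  rw [Qb, if_neg (not_lt.2 hu), one_mul, abs_of_nonneg hu, Nat.add_sub_cancel]
  push_cast
  rw [← min_add_add_right]
  ring_nf

lemma Qb_of_neg (b : ℕ) {u : ℝ} (hu : u < 0) : Qb b u = -Qb b (-u) := by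
  simp only [Qb, hu, if_true, abs_neg, if_neg (not_lt.2 (neg_nonneg.2 hu.le))]
  ring

theorem Qb_isNearestPointMap {b : ℕ} (hb : 1 ≤ b) : IsNearestPointMap (gridLevels b) (Qb b) := by
  obtain ⟨n, rfl⟩ : ∃ n, b = n + 1 := ⟨b - 1, by omega⟩
  have hnonneg : ∀ u, 0 ≤ u → Qb (n + 1) u ∈ gridLevels (n + 1) ∧
      ∀ c ∈ gridLevels (n + 1), |u - Qb (n + 1) u| ≤ |u - c| := by
    intro u hu
    have hfloor : 0 ≤ ⌊u⌋ := Int.floor_nonneg.2 hu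
    have hpow : (0 : ℤ) < 2 ^ n := by positivity
    rw [Qb_succ_of_nonneg n hu]
    refine ⟨mem_gridLevels_succ_iff.2 ⟨_, by omega, by omega, rfl⟩, fun c hc => ?_⟩
    obtain ⟨j, -, hj, rfl⟩ := mem_gridLevels_succ_iff.1 hc
    exact abs_sub_min_floor_add_half_le u (by omega)
  intro u
  rcases le_or_gt 0 u with hu | hu
  · exact hnonneg u hu
  obtain ⟨hmem, hnear⟩ := hnonneg (-u) (neg_nonneg.2 hu.le)
  rw [Qb_of_neg _ hu]
  refine ⟨neg_mem_gridLevels hmem, fun c hc => ?_⟩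
  convert hnear (-c) (neg_mem_gridLevels hc) using 1 <;> rw [← abs_neg] <;> ring_nf

lemma gridSet_finite (d b : ℕ) : (gridSet d b).Finite :=
  ((Set.Finite.pi fun _ => gridLevels_finite b).preimage (WithLp.ofLp_injective 2).injOn).subset
    fun _ hg j _ => hg j

lemma gridSet_nonempty (d b : ℕ) : (gridSet d b).Nonempty :=
  ⟨WithLp.toLp 2 fun _ => -(((2 : ℝ) ^ b - 1) / 2), fun _ => ⟨0, by positivity, by simp⟩⟩

lemma neg_mem_gridSet {d b : ℕ} {g : EuclideanSpace ℝ (Fin d)} (hg : g ∈ gridSet d b) :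
    -g ∈ gridSet d b :=
  fun j => neg_mem_gridLevels (hg j)

theorem stmt9 (d b : ℕ) (hd : 1 ≤ d) (hb : 1 ≤ b)
    (z : EuclideanSpace ℝ (Fin d)) (hz : ‖z‖ = 1) :
    sInf {v : ℝ | ∃ t : ℝ, 0 < t ∧ ∃ g ∈ gridSet d b, v = ‖z - t • g‖ ^ 2}
        = 1 - sSup {v : ℝ | ∃ g ∈ gridSet d b, v = ⟪z, ‖g‖⁻¹ • g⟫ ^ 2} ∧
    sInf {v : ℝ | ∃ t : ℝ, 0 < t ∧ ∃ g ∈ gridSet d b, v = ‖z - t • g‖ ^ 2}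
        = sInf {v : ℝ | ∃ α : ℝ, 0 < α ∧
            v = (1 / (d : ℝ)) *
              ∑ j : Fin d,
                (Real.sqrt d * z j - α * Qb b (Real.sqrt d * z j / α)) ^ 2} := by
  refine ⟨?_, ?_⟩
  · rw [sInf_norm_sub_smul_sq_eq_sub_sSup (gridSet_finite d b) (gridSet_nonempty d b)
      (fun _ => neg_mem_gridSet) z, hz, one_pow]
  · have hs : 0 < Real.sqrt d := Real.sqrt_pos.2 (by exact_mod_cast hd)
    have h := sInf_norm_sub_smul_sq_eq_sInf_sum (Qb_isNearestPointMap hb) hs z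
    rwa [Real.sq_sqrt (Nat.cast_nonneg d)] at h
end

section
/- Let d ≥ 2 and for each integer K ≥ 1 define the optimal K-point quantization distortion of the uniform sphere source: D*(K) = inf over nonempty finite sets C ⊂ ℝ^d with |C| ≤ K of ∫_{S^{d−1}} min_{o∈C} ‖z − o‖₂² dσ̄(z), where σ̄ is the uniform probability measure on S^{d−1}. Then limsup as K → ∞ of K^{2/(d−1)} · D*(K) is at most C_d := Γ(1 + 2/(d−1)) · (2·√π · Γ((d+1)/2)/Γ(d/2))^{2/(d−1)}. -/
/-!
Random coding. Draw the `K` code points independently from `σ̄`. For `z` on the sphere, all of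
them miss the cap of radius `s` around `z` with probability `(1 - σ̄(cap))ᴷ`, and integrating this
tail in `t = s²` gives the expected squared distance from `z` to the codebook; some codebook is at
least as good as the average.

With `n = d - 1`, a cap of radius `s ≤ 1` has measure at least `cₙ γₙ(s) sⁿ`, where
`cₙ = ωₙ / ((n + 1) ωₙ₊₁)` and `γₙ(s) → 1`: rotation invariance of `σ̄` and Fubini compare the cap
with the cone over it inside the unit ball. Using `1 - x ≤ e⁻ˣ`, the tail integral is then at most
`Γ(1 + 2/n) (K cₙ γₙ(r))^(-2/n)` plus a term exponentially small in `K`, and letting `r → 0`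
gives the constant `Γ(1 + 2/n) cₙ^(-2/n)`, which is `C_d`.
-/

open MeasureTheory

/-- The uniform (rotation-invariant) probability measure on the unit sphere, characterized as a
probability measure supported on the sphere and invariant under all linear isometries. -/
def IsUniformOnSphere {ι : Type*} [Fintype ι] (μ : Measure (EuclideanSpace ℝ ι)) : Prop :=
  IsProbabilityMeasure μ ∧
  μ (Metric.sphere (0 : EuclideanSpace ℝ ι) 1)ᶜ = 0 ∧
  ∀ R : EuclideanSpace ℝ ι ≃ₗᵢ[ℝ] EuclideanSpace ℝ ι, Measure.map R μ = μ

open Metric Set Filter Real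
open scoped ENNReal Topology

noncomputable def unitBallVolume (n : ℕ) : ℝ := √π ^ n / Gamma (n / 2 + 1)

lemma unitBallVolume_pos (n : ℕ) : 0 < unitBallVolume n := by
  unfold unitBallVolume
  positivity

lemma volume_closedBall_zero_euclidean {n : ℕ} [NeZero n] {R : ℝ} (hR : 0 ≤ R) :
    volume (closedBall (0 : EuclideanSpace ℝ (Fin n)) R) =
      .ofReal (R ^ n * unitBallVolume n) := by
  rw [EuclideanSpace.volume_closedBall, ← ENNReal.ofReal_pow hR,
    ← ENNReal.ofReal_mul (by positivity), Fintype.card_fin, unitBallVolume]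

lemma measurableSet_cone_prod (n : ℕ) (B h : ℝ) :
    MeasurableSet {p : ℝ × EuclideanSpace ℝ (Fin n) | p.1 ∈ Ioc 0 h ∧ ‖p.2‖ ≤ B * p.1} :=
  (measurable_fst measurableSet_Ioc).inter
    (measurableSet_le measurable_snd.norm (measurable_const.mul measurable_fst))

lemma volume_cone_prod {n : ℕ} [NeZero n] {B h : ℝ} (hB : 0 ≤ B) (hh : 0 ≤ h) :
    volume {p : ℝ × EuclideanSpace ℝ (Fin n) | p.1 ∈ Ioc 0 h ∧ ‖p.2‖ ≤ B * p.1} =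
      .ofReal (unitBallVolume n * B ^ n * h ^ (n + 1) / (n + 1)) := by
  set S := {p : ℝ × EuclideanSpace ℝ (Fin n) | p.1 ∈ Ioc 0 h ∧ ‖p.2‖ ≤ B * p.1}
  have hslice : ∀ t, volume (Prod.mk t ⁻¹' S) =
      (Ioc 0 h).indicator (fun t ↦ .ofReal (unitBallVolume n * B ^ n * t ^ n)) t := by
    intro t
    by_cases ht : t ∈ Ioc 0 h
    · have hball : Prod.mk t ⁻¹' S = closedBall 0 (B * t) := by
        ext y
        simp only [S, mem_preimage, mem_ofPred_eq, mem_closedBall, dist_zero_right, true_and, ht]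
      rw [indicator_of_mem ht, hball, volume_closedBall_zero_euclidean (mul_nonneg hB ht.1.le)]
      ring_nf
    · have hempty : Prod.mk t ⁻¹' S = ∅ := by
        ext y
        simp only [S, mem_preimage, mem_ofPred_eq, mem_empty_iff_false, iff_false, not_and]
        exact fun hmem ↦ absurd hmem ht
      rw [indicator_of_notMem ht, hempty, measure_empty]
  have hnonneg : ∀ᵐ t ∂volume.restrict (Ioc 0 h), 0 ≤ unitBallVolume n * B ^ n * t ^ n :=
    (ae_restrict_iff' measurableSet_Ioc).2 <| ae_of_all _ fun t ht ↦
      mul_nonneg (mul_nonneg (unitBallVolume_pos n).le (pow_nonneg hB n)) (pow_nonneg ht.1.le n)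
  rw [Measure.volume_eq_prod, Measure.prod_apply (measurableSet_cone_prod n B h),
    lintegral_congr hslice,
    lintegral_indicator measurableSet_Ioc, ← ofReal_integral_eq_lintegral_ofReal
      (Continuous.integrableOn_Ioc (by fun_prop)) hnonneg,
    ← intervalIntegral.integral_of_le hh, intervalIntegral.integral_const_mul, integral_pow]
  congr 1
  ring

noncomputable def splitHead (n : ℕ) :
    EuclideanSpace ℝ (Fin (n + 1)) ≃ᵐ ℝ × EuclideanSpace ℝ (Fin n) :=
  (MeasurableEquiv.toLp 2 _).symm.trans <| (MeasurableEquiv.piFinSuccAbove (fun _ ↦ ℝ) 0).trans <|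
    MeasurableEquiv.prodCongr (MeasurableEquiv.refl ℝ) (MeasurableEquiv.toLp 2 _)

lemma splitHead_apply {n : ℕ} (x : EuclideanSpace ℝ (Fin (n + 1))) :
    splitHead n x = (x 0, WithLp.toLp 2 fun j ↦ x j.succ) :=
  rfl

lemma measurePreserving_splitHead (n : ℕ) : MeasurePreserving (splitHead n) :=
  ((MeasurePreserving.id volume).prod (PiLp.volume_preserving_toLp (Fin n))).comp <|
    (volume_preserving_piFinSuccAbove (fun _ ↦ ℝ) 0).comp
      (EuclideanSpace.volume_preserving_symm_measurableEquiv_toLp _)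

lemma norm_sq_eq_head_sq_add {n : ℕ} (x : EuclideanSpace ℝ (Fin (n + 1))) :
    ‖x‖ ^ 2 = (splitHead n x).1 ^ 2 + ‖(splitHead n x).2‖ ^ 2 := by
  simp [splitHead_apply, EuclideanSpace.norm_sq_eq, Fin.sum_univ_succ]

lemma volume_cone {n : ℕ} [NeZero n] {a : ℝ} (ha0 : 0 < a) (ha1 : a ≤ 1) :
    volume {x : EuclideanSpace ℝ (Fin (n + 1)) | 0 < x 0 ∧ x 0 ≤ a ∧ a * ‖x‖ ≤ x 0} =
      .ofReal (unitBallVolume n * √(1 - a ^ 2) ^ n * a / (n + 1)) := by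
  obtain ⟨B, hBdef⟩ : ∃ B, B = √(1 - a ^ 2) / a := ⟨_, rfl⟩
  have hB0 : 0 ≤ B := hBdef ▸ by positivity
  have hB : B ^ 2 * a ^ 2 = 1 - a ^ 2 := by
    rw [hBdef, div_pow, sq_sqrt (by nlinarith), div_mul_cancel₀ _ (by positivity)]
  have hcone : {x : EuclideanSpace ℝ (Fin (n + 1)) | 0 < x 0 ∧ x 0 ≤ a ∧ a * ‖x‖ ≤ x 0} =
      splitHead n ⁻¹' {p | p.1 ∈ Ioc 0 a ∧ ‖p.2‖ ≤ B * p.1} := by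
    ext x
    have hnorm := norm_sq_eq_head_sq_add x
    simp only [mem_preimage, splitHead_apply, mem_ofPred_eq, mem_Ioc, and_assoc] at hnorm ⊢
    refine and_congr_right fun hx ↦ and_congr_right fun _ ↦ ?_
    rw [← sq_le_sq₀ (by positivity) hx.le, ← sq_le_sq₀ (norm_nonneg _) (mul_nonneg hB0 hx.le)]
    -- both sides say `a² ‖y‖² ≤ (1 - a²) x₀²`, where `x = (x₀, y)`
    constructor <;> intro h
    · refine le_of_mul_le_mul_left ?_ (by positivity : 0 < a ^ 2)
      linear_combination h - a ^ 2 * hnorm - x 0 ^ 2 * hB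
    · linear_combination a ^ 2 * h + a ^ 2 * hnorm + x 0 ^ 2 * hB
  rw [hcone, (measurePreserving_splitHead n).measure_preimage
      (measurableSet_cone_prod n B a).nullMeasurableSet,
    volume_cone_prod hB0 ha0.le, hBdef, div_pow]
  congr 1
  field_simp
  ring

section RotationInvariance

variable {E : Type*} [NormedAddCommGroup E] [InnerProductSpace ℝ E]

lemma exists_linearIsometryEquiv_apply_eq_s15 {y z : E} (h : ‖y‖ = ‖z‖) :
    ∃ R : E ≃ₗᵢ[ℝ] E, R y = z :=
  ⟨_, Submodule.reflection_sub h⟩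

lemma LinearIsometryEquiv.preimage_normalize_preimage_closedBall (R : E ≃ₗᵢ[ℝ] E) (y : E)
    (r : ℝ) : R ⁻¹' ((fun x ↦ ‖x‖⁻¹ • x) ⁻¹' closedBall (R y) r) =
      (fun x ↦ ‖x‖⁻¹ • x) ⁻¹' closedBall y r := by
  ext x
  simp only [mem_preimage, mem_closedBall, R.norm_map, ← R.map_smul, R.dist_map]

variable [MeasurableSpace E] [BorelSpace E]

lemma measure_closedBall_eq_of_norm_eq {μ : Measure E} (hμ : ∀ R : E ≃ₗᵢ[ℝ] E, μ.map R = μ)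
    {y z : E} (h : ‖y‖ = ‖z‖) (r : ℝ) : μ (closedBall y r) = μ (closedBall z r) := by
  obtain ⟨R, rfl⟩ := exists_linearIsometryEquiv_apply_eq_s15 h
  rw [← R.isometry.preimage_closedBall, ← Measure.map_apply R.continuous.measurable
    measurableSet_closedBall, hμ R]

lemma measure_normalize_preimage_closedBall_eq_of_norm_eq {ν : Measure E}
    (hν : ∀ R : E ≃ₗᵢ[ℝ] E, ν.map R = ν) {y z : E} (h : ‖y‖ = ‖z‖) (r : ℝ) :
    ν ((fun x ↦ ‖x‖⁻¹ • x) ⁻¹' closedBall y r) =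
      ν ((fun x ↦ ‖x‖⁻¹ • x) ⁻¹' closedBall z r) := by
  obtain ⟨R, rfl⟩ := exists_linearIsometryEquiv_apply_eq_s15 h
  have hf : Measurable fun x : E ↦ ‖x‖⁻¹ • x := measurable_norm.inv.smul measurable_id
  rw [← R.preimage_normalize_preimage_closedBall, ← Measure.map_apply R.continuous.measurable
    (hf measurableSet_closedBall), hν R]

lemma map_volume_restrict_closedBall_zero [FiniteDimensional ℝ E] (R : E ≃ₗᵢ[ℝ] E) (ρ : ℝ) :
    (volume.restrict (closedBall (0 : E) ρ)).map R = volume.restrict (closedBall 0 ρ) := by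
  conv_rhs => rw [← R.measurePreserving.map_eq]
  rw [Measure.restrict_map R.continuous.measurable measurableSet_closedBall, ← R.map_zero,
    R.isometry.preimage_closedBall, map_zero]

/-- Fubini over the pairs `(x, y)` with `‖x‖⁻¹ • x ∈ closedBall y r`: this is how volumes of cones
bound measures of caps without knowing that `μ` is the surface measure. -/
lemma measure_closedBall_mul_eq_lintegral [SecondCountableTopology E] {μ ν : Measure E}
    [SFinite μ] [SFinite ν] (hμ : ∀ R : E ≃ₗᵢ[ℝ] E, μ.map R = μ) (hν : ν {0} = 0) {z : E}
    (hz : ‖z‖ = 1) (r : ℝ) :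
    μ (closedBall z r) * ν univ = ∫⁻ y, ν ((fun x ↦ ‖x‖⁻¹ • x) ⁻¹' closedBall y r) ∂μ := by
  have hS : MeasurableSet {p : E × E | dist p.2 (‖p.1‖⁻¹ • p.1) ≤ r} :=
    measurableSet_le (measurable_snd.dist (measurable_fst.norm.inv.smul measurable_fst))
      measurable_const
  calc μ (closedBall z r) * ν univ = ∫⁻ x, μ (closedBall (‖x‖⁻¹ • x) r) ∂ν := by
        rw [← lintegral_const]
        refine lintegral_congr_ae ?_
        filter_upwards [measure_eq_zero_iff_ae_notMem.1 hν] with x hx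
        have hx1 : ‖‖x‖⁻¹ • x‖ = 1 := by
          rw [norm_smul, norm_inv, norm_norm, inv_mul_cancel₀ (norm_ne_zero_iff.2 hx)]
        rw [measure_closedBall_eq_of_norm_eq hμ (hz.trans hx1.symm)]
    _ = ν.prod μ {p : E × E | dist p.2 (‖p.1‖⁻¹ • p.1) ≤ r} := by
        rw [Measure.prod_apply hS]
        rfl
    _ = ∫⁻ y, ν ((fun x ↦ ‖x‖⁻¹ • x) ⁻¹' closedBall y r) ∂μ := by
        rw [Measure.prod_apply_symm hS]
        refine lintegral_congr fun y ↦ congrArg ν ?_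
        ext x
        rw [mem_preimage, mem_preimage, mem_closedBall, dist_comm]
        rfl

end RotationInvariance

section FiniteCodebook

variable {X ι : Type*} [PseudoMetricSpace X] [Fintype ι] [Nonempty ι]

lemma infDist_range_eq_inf' (x : X) (c : ι → X) :
    infDist x (range c) = Finset.univ.inf' Finset.univ_nonempty fun i ↦ dist x (c i) := by
  refine le_antisymm ?_ ((le_infDist (range_nonempty c)).2 ?_)
  · obtain ⟨i, -, hi⟩ := Finset.exists_mem_eq_inf' Finset.univ_nonempty fun i ↦ dist x (c i)
    exact hi ▸ infDist_le_dist_of_mem (mem_range_self i)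
  · rintro _ ⟨i, rfl⟩
    exact Finset.inf'_le _ (Finset.mem_univ i)

lemma continuous_infDist_range :
    Continuous fun p : (ι → X) × X ↦ infDist p.2 (range p.1) := by
  simp_rw [infDist_range_eq_inf']
  exact Continuous.finset_inf'_apply _ fun i _ ↦
    continuous_snd.dist ((continuous_apply i).comp continuous_fst)

lemma lt_infDist_range_iff {x : X} {c : ι → X} {s : ℝ} :
    s < infDist x (range c) ↔ ∀ i, s < dist x (c i) := by
  simp [infDist_range_eq_inf', Finset.lt_inf'_iff]

variable [MeasurableSpace X] [BorelSpace X] [SecondCountableTopology X]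

lemma lintegral_ofReal_infDist_range_sq (μ : Measure X) [SigmaFinite μ] (x : X) :
    ∫⁻ c : ι → X, .ofReal (infDist x (range c) ^ 2) ∂Measure.pi (fun _ ↦ μ) =
      ∫⁻ t in Ioi 0, μ (closedBall x √t)ᶜ ^ Fintype.card ι := by
  have hmeas : Measurable fun c : ι → X ↦ infDist x (range c) ^ 2 :=
    ((continuous_infDist_range.comp (continuous_id.prodMk continuous_const)).pow 2).measurable
  rw [lintegral_eq_lintegral_meas_lt _ (ae_of_all _ fun c ↦ by positivity) hmeas.aemeasurable]
  refine setLIntegral_congr_fun measurableSet_Ioi fun t ht ↦ ?_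
  have hset : {c : ι → X | t < infDist x (range c) ^ 2} =
      univ.pi fun _ ↦ (closedBall x √t)ᶜ := by
    ext c
    simp only [mem_ofPred_eq, mem_univ_pi, mem_compl_iff, mem_closedBall, not_le, dist_comm (c _)]
    rw [← lt_infDist_range_iff, ← sqrt_lt_sqrt_iff (le_of_lt ht), sqrt_sq infDist_nonneg]
  rw [hset, Measure.pi_pi, Finset.prod_const, Finset.card_univ]

lemma exists_integral_infDist_range_sq_le (μ : Measure X) [IsProbabilityMeasure μ] {B : ℝ}
    (hB : 0 ≤ B) (h : ∀ᵐ x ∂μ,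
      ∫⁻ c : ι → X, .ofReal (infDist x (range c) ^ 2) ∂Measure.pi (fun _ ↦ μ) ≤ .ofReal B) :
    ∃ c : ι → X, ∫ x, infDist x (range c) ^ 2 ∂μ ≤ B := by
  have hF : Measurable fun p : (ι → X) × X ↦ ENNReal.ofReal (infDist p.2 (range p.1) ^ 2) :=
    ENNReal.measurable_ofReal.comp (continuous_infDist_range.pow 2).measurable
  have hmean :
      ∫⁻ c : ι → X, ∫⁻ x, .ofReal (infDist x (range c) ^ 2) ∂μ ∂Measure.pi (fun _ ↦ μ) ≤
        .ofReal B := by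
    rw [lintegral_lintegral_swap hF.aemeasurable]
    calc _ ≤ ∫⁻ _, .ofReal B ∂μ := lintegral_mono_ae h
      _ = .ofReal B := by simp
  obtain ⟨c, hc⟩ := exists_le_lintegral
    ((hF.lintegral_prod_right' (ν := μ)).aemeasurable (μ := Measure.pi fun _ ↦ μ))
  refine ⟨c, ?_⟩
  have hcont : Continuous fun x ↦ infDist x (range c) ^ 2 := (continuous_infDist_pt _).pow 2
  rw [integral_eq_lintegral_of_nonneg_ae (ae_of_all _ fun x ↦ by positivity)
    hcont.aestronglyMeasurable]
  exact ENNReal.toReal_le_of_le_ofReal hB (hc.trans hmean)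

end FiniteCodebook

lemma ofReal_one_sub_pow_le_ofReal_exp (x : ℝ) (K : ℕ) :
    ENNReal.ofReal (1 - x) ^ K ≤ .ofReal (exp (-(K * x))) := by
  calc ENNReal.ofReal (1 - x) ^ K ≤ .ofReal (exp (-x)) ^ K :=
        pow_le_pow_left₀ zero_le (ENNReal.ofReal_le_ofReal (by linarith [add_one_le_exp (-x)])) K
    _ = .ofReal (exp (-(K * x))) := by
        rw [← ENNReal.ofReal_pow (exp_pos _).le, ← exp_nat_mul, mul_neg]

lemma lintegral_exp_neg_mul_sqrt_pow {n : ℕ} (hn : n ≠ 0) {b : ℝ} (hb : 0 < b) :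
    ∫⁻ t in Ioi 0, .ofReal (exp (-b * √t ^ n)) =
      .ofReal (Gamma (2 / n + 1) * b ^ (-(2 / n : ℝ))) := by
  have hp : (0 : ℝ) < n / 2 := by positivity
  have hrpow : ∀ t ∈ Ioi (0 : ℝ), exp (-b * √t ^ n) = exp (-b * t ^ ((n : ℝ) / 2)) := by
    intro t ht
    rw [sqrt_eq_rpow, ← rpow_natCast, ← rpow_mul (le_of_lt ht), one_div_mul_eq_div]
  have hint : ∫ t in Ioi (0 : ℝ), exp (-b * t ^ ((n : ℝ) / 2)) =
      Gamma (2 / n + 1) * b ^ (-(2 / n : ℝ)) := by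
    rw [integral_exp_neg_mul_rpow hp hb, mul_comm, one_div_div, neg_div, one_div_div]
  rw [setLIntegral_congr_fun measurableSet_Ioi fun t ht ↦ congrArg ENNReal.ofReal (hrpow t ht),
    ← ofReal_integral_eq_lintegral_ofReal _ (ae_of_all _ fun t ↦ (exp_pos _).le), hint]
  refine Integrable.of_integral_ne_zero ?_
  rw [hint]
  exact (mul_pos (Gamma_pos_of_pos (by positivity)) (rpow_pos_of_pos hb _)).ne'

lemma setLIntegral_Ioi_pow_le {f : ℝ → ℝ≥0∞} {n K : ℕ} (hn : n ≠ 0) (hK : K ≠ 0) {κ r D : ℝ}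
    (hκ : 0 < κ) (hD : 0 ≤ D)
    (hsmall : ∀ t ∈ Ioc 0 (r ^ 2), f t ≤ .ofReal (1 - κ * √t ^ n))
    (hlarge : ∀ t ∈ Ioc (r ^ 2) D, f t ≤ .ofReal (1 - κ * r ^ n))
    (hfar : ∀ t, D < t → f t = 0) :
    ∫⁻ t in Ioi 0, f t ^ K ≤
      .ofReal (Gamma (2 / n + 1) * (K * κ) ^ (-(2 / n : ℝ)) + D * exp (-(K * (κ * r ^ n)))) := by
  set c := ENNReal.ofReal (exp (-(K * (κ * r ^ n))))
  have hpt : ∀ t ∈ Ioi (0 : ℝ), f t ^ K ≤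
      .ofReal (exp (-(K * κ) * √t ^ n)) + (Ioc 0 D).indicator (fun _ ↦ c) t := by
    intro t ht
    rcases le_or_gt t (r ^ 2) with htr | htr
    · calc f t ^ K ≤ .ofReal (1 - κ * √t ^ n) ^ K :=
            pow_le_pow_left₀ zero_le (hsmall t ⟨ht, htr⟩) K
        _ ≤ .ofReal (exp (-(K * (κ * √t ^ n)))) := ofReal_one_sub_pow_le_ofReal_exp _ _
        _ ≤ _ := by rw [← mul_assoc, ← neg_mul]; exact le_self_add
    rcases le_or_gt t D with htD | htD
    · calc f t ^ K ≤ .ofReal (1 - κ * r ^ n) ^ K :=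
            pow_le_pow_left₀ zero_le (hlarge t ⟨htr, htD⟩) K
        _ ≤ c := ofReal_one_sub_pow_le_ofReal_exp _ _
        _ ≤ _ := by
            rw [indicator_of_mem (show t ∈ Ioc 0 D from ⟨ht, htD⟩)]
            exact le_add_self
    · rw [hfar t htD, zero_pow hK]
      exact zero_le
  have hKκ : 0 < K * κ := mul_pos (by positivity) hκ
  calc ∫⁻ t in Ioi 0, f t ^ K
      ≤ ∫⁻ t in Ioi 0, (.ofReal (exp (-(K * κ) * √t ^ n)) + (Ioc 0 D).indicator (fun _ ↦ c) t) :=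
        setLIntegral_mono' measurableSet_Ioi hpt
    _ = .ofReal (Gamma (2 / n + 1) * (K * κ) ^ (-(2 / n : ℝ))) +
          ∫⁻ t in Ioi 0, (Ioc 0 D).indicator (fun _ ↦ c) t := by
        rw [lintegral_add_left (by fun_prop), lintegral_exp_neg_mul_sqrt_pow hn hKκ]
    _ ≤ .ofReal (Gamma (2 / n + 1) * (K * κ) ^ (-(2 / n : ℝ))) + c * .ofReal D := by
        gcongr
        refine (setLIntegral_le_lintegral _ _).trans_eq ?_
        rw [lintegral_indicator_const measurableSet_Ioc, volume_Ioc, sub_zero]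
    _ = _ := by
        rw [← ENNReal.ofReal_mul (exp_pos _).le,
          ← ENNReal.ofReal_add (by positivity) (by positivity), mul_comm (exp _)]

lemma prob_compl_le_ofReal_one_sub {Ω : Type*} [MeasurableSpace Ω] {μ : Measure Ω}
    [IsProbabilityMeasure μ] {s : Set Ω} (hs : MeasurableSet s) {v : ℝ} (hv : 0 ≤ v)
    (h : ENNReal.ofReal v ≤ μ s) : μ sᶜ ≤ ENNReal.ofReal (1 - v) := by
  rw [prob_compl_eq_one_sub hs, ENNReal.ofReal_sub _ hv, ENNReal.ofReal_one]
  exact tsub_le_tsub_left h 1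

/-- `cₙ = ωₙ / ((n + 1) ωₙ₊₁)`, the volume of the unit `n`-ball over the area of the unit
`n`-sphere: a cap of small radius `r` has normalized measure about `cₙ rⁿ`. -/
noncomputable def capConst (n : ℕ) : ℝ := unitBallVolume n / ((n + 1) * unitBallVolume (n + 1))

/-- The cone with apex `0` over a cap of radius `r` has height `1 - r²/2` and base radius
`r √(1 - r²/4)`, so its volume is `ωₙ₊₁ cₙ γₙ(r) rⁿ` with `γₙ = capFactor n`. -/
noncomputable def capFactor (n : ℕ) (r : ℝ) : ℝ := (1 - r ^ 2 / 2) * √(1 - r ^ 2 / 4) ^ n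

lemma capConst_pos (n : ℕ) : 0 < capConst n :=
  div_pos (unitBallVolume_pos n) (mul_pos (by positivity) (unitBallVolume_pos (n + 1)))

lemma capConst_inv_eq (n : ℕ) :
    (capConst n)⁻¹ = 2 * √π * Gamma ((n + 1 + 1) / 2) / Gamma ((n + 1) / 2) := by
  have hΓ : Gamma ((n + 1) / 2 + 1) = (n + 1) / 2 * Gamma ((n + 1) / 2) :=
    Gamma_add_one (by positivity)
  have h1 : Gamma ((n + 1 + 1) / 2) = Gamma (n / 2 + 1) := by ring_nf
  have : 0 < Gamma ((n + 1) / 2) := Gamma_pos_of_pos (by positivity)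
  have : 0 < Gamma (n / 2 + 1) := Gamma_pos_of_pos (by positivity)
  simp only [capConst, unitBallVolume, Nat.cast_add, Nat.cast_one, hΓ, h1]
  field_simp
  ring

lemma capFactor_pos (n : ℕ) {r : ℝ} (hr0 : 0 ≤ r) (hr1 : r ≤ 1) : 0 < capFactor n r := by
  have h1 : 0 < 1 - r ^ 2 / 2 := by nlinarith
  have h2 : 0 < √(1 - r ^ 2 / 4) := sqrt_pos.2 (by nlinarith)
  unfold capFactor
  positivity

lemma capFactor_zero (n : ℕ) : capFactor n 0 = 1 := by
  simp [capFactor]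

lemma continuous_capFactor (n : ℕ) : Continuous (capFactor n) := by
  unfold capFactor
  fun_prop

lemma capFactor_le_capFactor (n : ℕ) {r s : ℝ} (hs : 0 ≤ s) (hsr : s ≤ r) (hr : r ≤ 1) :
    capFactor n r ≤ capFactor n s := by
  unfold capFactor
  exact mul_le_mul (by nlinarith)
    (pow_le_pow_left₀ (sqrt_nonneg _) (sqrt_le_sqrt (by nlinarith)) n) (by positivity)
    (by nlinarith)

lemma IsUniformOnSphere.ae_norm_eq_one {ι : Type*} [Fintype ι]
    {μ : Measure (EuclideanSpace ℝ ι)} (hμ : IsUniformOnSphere μ) : ∀ᵐ y ∂μ, ‖y‖ = 1 := by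
  filter_upwards [measure_eq_zero_iff_ae_notMem.1 hμ.2.1] with y hy
  simpa using hy

lemma cone_subset_closedBall_inter_normalize_preimage {n : ℕ} {r : ℝ} (hr : 0 ≤ r) :
    {x : EuclideanSpace ℝ (Fin (n + 1)) |
        0 < x 0 ∧ x 0 ≤ 1 - r ^ 2 / 2 ∧ (1 - r ^ 2 / 2) * ‖x‖ ≤ x 0} ⊆
      closedBall 0 1 ∩ (fun x ↦ ‖x‖⁻¹ • x) ⁻¹' closedBall (EuclideanSpace.single 0 (1 : ℝ)) r := by
  rintro x ⟨hx0, hxa, hcone⟩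
  have hx : 0 < ‖x‖ := norm_pos_iff.2 fun h ↦ by simp [h] at hx0
  refine ⟨mem_closedBall_zero_iff.2 <|
    le_of_mul_le_mul_left (by linarith) (hx0.trans_le hxa), ?_⟩
  have hinner : inner ℝ (‖x‖⁻¹ • x) (EuclideanSpace.single 0 (1 : ℝ)) = x 0 / ‖x‖ := by
    simp [EuclideanSpace.inner_single_right, div_eq_inv_mul]
  have hdist : dist (‖x‖⁻¹ • x) (EuclideanSpace.single 0 (1 : ℝ)) ^ 2 ≤ r ^ 2 := by
    have hcos : 1 - r ^ 2 / 2 ≤ x 0 / ‖x‖ := (le_div_iff₀ hx).2 hcone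
    rw [dist_eq_norm, norm_sub_sq_real, hinner, norm_smul, norm_inv, norm_norm,
      inv_mul_cancel₀ hx.ne', PiLp.norm_single, norm_one]
    linarith
  rw [mem_preimage, mem_closedBall]
  exact (sq_le_sq₀ dist_nonneg hr).1 hdist

theorem IsUniformOnSphere.ofReal_le_measure_closedBall {n : ℕ} [NeZero n]
    {μ : Measure (EuclideanSpace ℝ (Fin (n + 1)))} (hμ : IsUniformOnSphere μ)
    {z : EuclideanSpace ℝ (Fin (n + 1))} (hz : ‖z‖ = 1) {r : ℝ} (hr0 : 0 < r) (hr1 : r ≤ 1) :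
    ENNReal.ofReal (capConst n * capFactor n r * r ^ n) ≤ μ (closedBall z r) := by
  have := hμ.1
  set ν := volume.restrict (closedBall (0 : EuclideanSpace ℝ (Fin (n + 1))) 1)
  set coneVol := unitBallVolume n * √(1 - (1 - r ^ 2 / 2) ^ 2) ^ n * (1 - r ^ 2 / 2) / (n + 1)
  have hcone : ∀ y : EuclideanSpace ℝ (Fin (n + 1)), ‖y‖ = 1 →
      ENNReal.ofReal coneVol ≤ ν ((fun x ↦ ‖x‖⁻¹ • x) ⁻¹' closedBall y r) := by
    intro y hy
    have hy' : ‖y‖ = ‖EuclideanSpace.single (0 : Fin (n + 1)) (1 : ℝ)‖ := by simp [hy]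
    rw [measure_normalize_preimage_closedBall_eq_of_norm_eq
      (map_volume_restrict_closedBall_zero · 1) hy',
      Measure.restrict_apply' measurableSet_closedBall, inter_comm,
      ← volume_cone (by nlinarith) (by nlinarith)]
    exact measure_mono (cone_subset_closedBall_inter_normalize_preimage hr0.le)
  have hν0 : ν {0} = 0 := by
    rw [Measure.restrict_apply' measurableSet_closedBall]
    exact measure_mono_null inter_subset_left (measure_singleton 0)
  have hνuniv : ν univ = ENNReal.ofReal (unitBallVolume (n + 1)) := by
    rw [Measure.restrict_apply_univ, volume_closedBall_zero_euclidean zero_le_one, one_pow,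
      one_mul]
  have hcap :
      ENNReal.ofReal coneVol ≤ μ (closedBall z r) * ENNReal.ofReal (unitBallVolume (n + 1)) := by
    rw [← hνuniv, measure_closedBall_mul_eq_lintegral hμ.2.2 hν0 hz r]
    calc ENNReal.ofReal coneVol = ∫⁻ _, ENNReal.ofReal coneVol ∂μ := by simp
      _ ≤ _ := lintegral_mono_ae (hμ.ae_norm_eq_one.mono hcone)
  have hV : capConst n * capFactor n r * r ^ n = coneVol / unitBallVolume (n + 1) := by
    have hsqrt : √(1 - (1 - r ^ 2 / 2) ^ 2) = r * √(1 - r ^ 2 / 4) := by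
      rw [show 1 - (1 - r ^ 2 / 2) ^ 2 = r ^ 2 * (1 - r ^ 2 / 4) by ring,
        sqrt_mul (sq_nonneg r), sqrt_sq hr0.le]
    simp only [coneVol, hsqrt, capConst, capFactor]
    field_simp
    ring
  rw [hV, ENNReal.ofReal_div_of_pos (unitBallVolume_pos _)]
  exact ENNReal.div_le_of_le_mul hcap

lemma IsUniformOnSphere.ofReal_le_measure_closedBall' {n : ℕ} [NeZero n]
    {μ : Measure (EuclideanSpace ℝ (Fin (n + 1)))} (hμ : IsUniformOnSphere μ)
    {z : EuclideanSpace ℝ (Fin (n + 1))} (hz : ‖z‖ = 1) {r s : ℝ} (hr0 : 0 < r) (hr1 : r ≤ 1)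
    (hs : 0 < s) :
    ENNReal.ofReal (capConst n * capFactor n r * min r s ^ n) ≤ μ (closedBall z s) := by
  rcases le_total s r with hsr | hrs
  · rw [min_eq_right hsr]
    refine le_trans (ENNReal.ofReal_le_ofReal ?_)
      (hμ.ofReal_le_measure_closedBall hz hs (hsr.trans hr1))
    exact mul_le_mul_of_nonneg_right (mul_le_mul_of_nonneg_left
      (capFactor_le_capFactor n hs.le hsr hr1) (capConst_pos n).le) (by positivity)
  · rw [min_eq_left hrs]
    exact (hμ.ofReal_le_measure_closedBall hz hr0 hr1).trans
      (measure_mono (closedBall_subset_closedBall hrs))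

theorem IsUniformOnSphere.exists_integral_infDist_sq_le {n K : ℕ} [NeZero n] (hK : K ≠ 0)
    {μ : Measure (EuclideanSpace ℝ (Fin (n + 1)))} (hμ : IsUniformOnSphere μ) {r : ℝ}
    (hr0 : 0 < r) (hr1 : r ≤ 1) :
    ∃ c : Fin K → EuclideanSpace ℝ (Fin (n + 1)), ∫ z, infDist z (range c) ^ 2 ∂μ ≤
      Gamma (2 / n + 1) * (K * (capConst n * capFactor n r)) ^ (-(2 / n : ℝ)) +
        4 * exp (-(K * (capConst n * capFactor n r * r ^ n))) := by
  have := hμ.1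
  have : Nonempty (Fin K) := ⟨⟨0, Nat.pos_of_ne_zero hK⟩⟩
  have hκ : 0 < capConst n * capFactor n r :=
    mul_pos (capConst_pos n) (capFactor_pos n hr0.le hr1)
  refine exists_integral_infDist_range_sq_le μ (by positivity) ?_
  filter_upwards [hμ.ae_norm_eq_one] with z hz
  rw [lintegral_ofReal_infDist_range_sq, Fintype.card_fin]
  -- `4` is the squared diameter of the sphere
  refine setLIntegral_Ioi_pow_le (NeZero.ne n) hK hκ zero_le_four (fun t ht ↦ ?_)
    (fun t ht ↦ ?_) (fun t ht ↦ ?_)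
  · have hst : √t ≤ r := by simpa [sqrt_sq hr0.le] using sqrt_le_sqrt ht.2
    refine prob_compl_le_ofReal_one_sub measurableSet_closedBall (by positivity) ?_
    simpa [min_eq_right hst] using
      hμ.ofReal_le_measure_closedBall' hz hr0 hr1 (sqrt_pos.2 ht.1)
  · have hrt : r ≤ √t := by simpa [sqrt_sq hr0.le] using sqrt_le_sqrt ht.1.le
    refine prob_compl_le_ofReal_one_sub measurableSet_closedBall (by positivity) ?_
    simpa [min_eq_left hrt] using
      hμ.ofReal_le_measure_closedBall' hz hr0 hr1 (hr0.trans_le hrt)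
  · refine measure_mono_null (compl_subset_compl.2 fun y hy ↦ ?_) hμ.2.1
    have h2 : (2 : ℝ) < √t := (lt_sqrt zero_le_two).2 (by norm_num; exact ht)
    rw [mem_closedBall, dist_eq_norm]
    linarith [norm_sub_le y z, mem_sphere_zero_iff_norm.1 hy]

noncomputable def optimalDistortion {X : Type*} [PseudoMetricSpace X] [MeasurableSpace X]
    (μ : Measure X) (K : ℕ) : ℝ :=
  sInf {v : ℝ | ∃ C : Finset X, C.Nonempty ∧ C.card ≤ K ∧
    v = ∫ z, infDist z (C : Set X) ^ 2 ∂μ}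

lemma optimalDistortion_le {X : Type*} [PseudoMetricSpace X] [MeasurableSpace X] (μ : Measure X)
    {K : ℕ} (hK : K ≠ 0) (c : Fin K → X) :
    optimalDistortion μ K ≤ ∫ z, infDist z (range c) ^ 2 ∂μ := by
  classical
  have : Nonempty (Fin K) := ⟨⟨0, Nat.pos_of_ne_zero hK⟩⟩
  refine csInf_le ⟨0, ?_⟩ ⟨Finset.univ.image c, Finset.univ_nonempty.image c,
    Finset.card_image_le.trans (by simp), by simp⟩
  rintro _ ⟨C, -, -, rfl⟩
  exact integral_nonneg fun z ↦ by positivity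

lemma tendsto_capConst_mul_capFactor_rpow (n : ℕ) (θ : ℝ) :
    Tendsto (fun r ↦ (capConst n * capFactor n r) ^ θ) (𝓝 0) (𝓝 (capConst n ^ θ)) := by
  have hcont := (continuous_const.mul (continuous_capFactor n)).tendsto 0 (f := fun r ↦
    capConst n * capFactor n r)
  rw [capFactor_zero, mul_one] at hcont
  exact hcont.rpow_const (Or.inl (capConst_pos n).ne')

lemma tendsto_natCast_rpow_mul_exp_neg_mul (θ : ℝ) {b : ℝ} (hb : 0 < b) :
    Tendsto (fun K : ℕ ↦ (K : ℝ) ^ θ * exp (-(K * b))) atTop (𝓝 0) := by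
  refine ((tendsto_rpow_mul_exp_neg_mul_atTop_nhds_zero θ b hb).comp
    tendsto_natCast_atTop_atTop).congr fun K ↦ ?_
  simp [mul_comm b]

theorem IsUniformOnSphere.eventually_rpow_mul_optimalDistortion_le {n : ℕ} [NeZero n]
    {μ : Measure (EuclideanSpace ℝ (Fin (n + 1)))} (hμ : IsUniformOnSphere μ) {ε : ℝ}
    (hε : 0 < ε) :
    ∀ᶠ K : ℕ in atTop, (K : ℝ) ^ (2 / n : ℝ) * optimalDistortion μ K ≤
      Gamma (2 / n + 1) * capConst n ^ (-(2 / n : ℝ)) + ε := by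
  set θ : ℝ := 2 / n
  have hΓ : ∀ᶠ r in 𝓝 0, Gamma (θ + 1) * (capConst n * capFactor n r) ^ (-θ) <
      Gamma (θ + 1) * capConst n ^ (-θ) + ε / 2 :=
    ((tendsto_capConst_mul_capFactor_rpow n (-θ)).const_mul _).eventually
      (gt_mem_nhds (lt_add_of_pos_right _ (half_pos hε)))
  have hr : ∀ᶠ r in 𝓝[>] 0, Gamma (θ + 1) * (capConst n * capFactor n r) ^ (-θ) <
      Gamma (θ + 1) * capConst n ^ (-θ) + ε / 2 ∧ 0 < r ∧ r ≤ 1 := by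
    filter_upwards [nhdsWithin_le_nhds hΓ, self_mem_nhdsWithin,
      nhdsWithin_le_nhds (Iic_mem_nhds zero_lt_one)] with r h1 h2 h3
    exact ⟨h1, h2, h3⟩
  obtain ⟨r, hrΓ, hr0, hr1⟩ := hr.exists
  set κ := capConst n * capFactor n r
  have hκ : 0 < κ := mul_pos (capConst_pos n) (capFactor_pos n hr0.le hr1)
  have htail : ∀ᶠ K : ℕ in atTop, 4 * ((K : ℝ) ^ θ * exp (-(K * (κ * r ^ n)))) ≤ ε / 2 :=
    ((tendsto_natCast_rpow_mul_exp_neg_mul θ (by positivity)).const_mul 4).eventually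
      (ge_mem_nhds (by linarith))
  filter_upwards [htail, eventually_ne_atTop 0] with K hK hK0
  obtain ⟨c, hc⟩ := hμ.exists_integral_infDist_sq_le hK0 hr0 hr1
  have hKpos : (0 : ℝ) < K := by positivity
  have hscale : (K : ℝ) ^ θ * (K * κ) ^ (-θ) = κ ^ (-θ) := by
    rw [mul_rpow hKpos.le hκ.le, ← mul_assoc, ← rpow_add hKpos, add_neg_cancel, rpow_zero, one_mul]
  calc (K : ℝ) ^ θ * optimalDistortion μ K
      ≤ (K : ℝ) ^ θ * (Gamma (θ + 1) * (K * κ) ^ (-θ) + 4 * exp (-(K * (κ * r ^ n)))) :=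
        mul_le_mul_of_nonneg_left ((optimalDistortion_le μ hK0 c).trans hc) (by positivity)
    _ = Gamma (θ + 1) * κ ^ (-θ) + 4 * ((K : ℝ) ^ θ * exp (-(K * (κ * r ^ n)))) := by
        rw [mul_add, mul_left_comm, hscale, mul_left_comm]
    _ ≤ Gamma (θ + 1) * capConst n ^ (-θ) + ε / 2 + ε / 2 := add_le_add hrΓ.le hK
    _ = _ := by ring

theorem stmt15 (d : ℕ) (hd : 2 ≤ d)
    (μ : Measure (EuclideanSpace ℝ (Fin d))) (hμ : IsUniformOnSphere μ)
    (D : ℕ → ℝ)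
    (hD : ∀ K : ℕ, D K =
      sInf {v : ℝ | ∃ C : Finset (EuclideanSpace ℝ (Fin d)), C.Nonempty ∧ C.card ≤ K ∧
        v = ∫ z, Metric.infDist z (C : Set (EuclideanSpace ℝ (Fin d))) ^ 2 ∂μ}) :
    ∀ ε : ℝ, 0 < ε → ∀ᶠ K : ℕ in Filter.atTop,
      (K : ℝ) ^ (2 / ((d : ℝ) - 1)) * D K
        ≤ Real.Gamma (1 + 2 / ((d : ℝ) - 1)) *
            (2 * Real.sqrt Real.pi * Real.Gamma (((d : ℝ) + 1) / 2) /
              Real.Gamma ((d : ℝ) / 2)) ^ (2 / ((d : ℝ) - 1)) + ε := by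
  intro ε hε
  obtain ⟨n, rfl⟩ : ∃ n, d = n + 1 := ⟨d - 1, by omega⟩
  have : NeZero n := ⟨by omega⟩
  filter_upwards [hμ.eventually_rpow_mul_optimalDistortion_le hε] with K hK
  rw [hD K]
  push_cast
  rw [add_sub_cancel_right, ← capConst_inv_eq, inv_rpow (capConst_pos n).le,
    ← rpow_neg (capConst_pos n).le, add_comm 1]
  exact hK
end
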